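/- arXiv:2312.07117 — 7 statements merged into one kernel-verified Lean document; each statement's English description precedes it below -/
import Mathlib

section
/- In any minimal temporally connected temporal graph on n vertices with a proper labelling, every necessary label belongs to at least one of the n spanning temporal branchings rooted at the n distinct vertices; consequently, a minimal temporally connected temporal graph equals the union of any n spanning temporal branchings with distinct roots. -/
open Finset

abbrev TLabel (n : ℕ) := Sym2 (Fin n) → Finset ℕ

namespace Temporal

variable {n : ℕ}

/-- Journeys: from `u` one can reach `v` arriving exactly at time `t`. -/
inductive JTo (L : TLabel n) (u : Fin n) : Fin n → ℕ → Prop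
  | single (v : Fin n) (t : ℕ) : t ∈ L s(u, v) → JTo L u v t
  | step (v w : Fin n) (t t' : ℕ) : JTo L u v t → t' ∈ L s(v, w) → t < t' → JTo L u w t'

/-- Temporal reachability. -/
def Reach (L : TLabel n) (u v : Fin n) : Prop := u = v ∨ ∃ t, JTo L u v t

/-- Temporal connectivity. -/
def TC (L : TLabel n) : Prop := ∀ u v, Reach L u v

def NoLoops (L : TLabel n) : Prop := ∀ v : Fin n, L s(v, v) = ∅

/-- Proper labelling: incident distinct edges share no label. -/
def Proper (L : TLabel n) : Prop :=
  ∀ e f : Sym2 (Fin n), e ≠ f → (∃ v, v ∈ e ∧ v ∈ f) → Disjoint (L e) (L f)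

/-- Remove a single label `t` from edge `e`. -/
def erase (L : TLabel n) (e : Sym2 (Fin n)) (t : ℕ) : TLabel n :=
  fun f => if f = e then (L f).erase t else L f

/-- A label is necessary if removing it strictly reduces reachability. -/
def Necessary (L : TLabel n) (e : Sym2 (Fin n)) (t : ℕ) : Prop :=
  ∃ u v, Reach L u v ∧ ¬ Reach (erase L e t) u v

/-- A minimal labelling: all labels are necessary. -/
def Minimal (L : TLabel n) : Prop := ∀ e t, t ∈ L e → Necessary L e t

/-- Total number of labels (temporal cost). -/
def cost (L : TLabel n) : ℕ := ∑ e : Sym2 (Fin n), (L e).card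

/-- The labelling only uses edges of `G`. -/
def SupportedOn (L : TLabel n) (G : SimpleGraph (Fin n)) : Prop :=
  ∀ e, L e ≠ ∅ → e ∈ G.edgeSet

/-- A spanning temporal branching of `L` rooted at `r`: a sub-labelling with at most one
label per edge, `n - 1` labels in total, whose root reaches every vertex. -/
def IsBranching (L B : TLabel n) (r : Fin n) : Prop :=
  (∀ e, B e ⊆ L e) ∧ (∀ e, (B e).card ≤ 1) ∧ cost B = n - 1 ∧ ∀ v, Reach B r v

theorem JTo.mono {B L' : TLabel n} (h : ∀ f, B f ⊆ L' f) {u v : Fin n} {t : ℕ} :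
    JTo B u v t → JTo L' u v t := by
  intro hj
  induction hj with
  | single v t ht => exact .single v t (h _ ht)
  | step v w t t' _ ht hlt ih => exact .step v w t t' ih (h _ ht) hlt

/-- In a minimal temporally connected proper temporal graph, every necessary label belongs to
one of any `n` spanning temporal branchings with distinct roots; consequently the graph equals
the union of these branchings. -/
theorem stmt0 {n : ℕ} (L : TLabel n) (hP : Proper L) (hTC : TC L) (hMin : Minimal L)
    (B : Fin n → TLabel n) (hB : ∀ r, IsBranching L (B r) r) :
    (∀ e t, t ∈ L e → Necessary L e t → ∃ r, t ∈ B r e) ∧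
    (∀ e t, t ∈ L e ↔ ∃ r, t ∈ B r e) := by
  have key : ∀ e t, t ∈ L e → ∃ r, t ∈ B r e := by
    intro e t ht
    obtain ⟨u, v, _, hnr⟩ := hMin e t ht
    refine ⟨u, ?_⟩
    by_contra htB
    apply hnr
    obtain ⟨hsub, -, -, hreach⟩ := hB u
    have hmono : ∀ f, B u f ⊆ erase L e t f := by
      intro f x hx
      unfold erase
      split
      · next hf =>
        subst hf
        exact Finset.mem_erase.mpr ⟨fun h => htB (h ▸ hx), hsub f hx⟩
      · exact hsub f hx
    rcases hreach v with h | ⟨s, hj⟩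
    · exact Or.inl h
    · exact Or.inr ⟨s, hj.mono hmono⟩
  exact ⟨fun e t ht _ => key e t ht,
    fun e t => ⟨fun ht => key e t ht, fun ⟨r, hr⟩ => (hB r).1 e hr⟩⟩

end Temporal
end

section
/- The maximum total number of labels T(𝒢) over all minimal temporally connected proper temporal graphs 𝒢 on n vertices is at most n² − n − 1. -/
open Finset

namespace Temporal

variable {n : ℕ}

-- auxiliary development

inductive JGt (L : TLabel n) (lo : ℕ) (x : Fin n) : Fin n → ℕ → Prop
  | single (v : Fin n) (t : ℕ) : t ∈ L s(x, v) → lo < t → JGt L lo x v t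
  | step (v w : Fin n) (t t' : ℕ) : JGt L lo x v t → t' ∈ L s(v, w) → t < t' → JGt L lo x w t'

variable {L : TLabel n} {e : Sym2 (Fin n)} {t : ℕ}

lemma mem_erase' {f : Sym2 (Fin n)} {t₀ : ℕ} (h : f ≠ e ∨ t₀ ≠ t) (hm : t₀ ∈ L f) :
    t₀ ∈ erase L e t f := by
  unfold erase
  split_ifs with hf
  · exact Finset.mem_erase.2 ⟨h.resolve_left (not_not_intro hf), hm⟩
  · exact hm

lemma jgt_lt {lo : ℕ} {x v : Fin n} {ar : ℕ} (h : JGt L lo x v ar) : lo < ar := by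
  induction h with
  | single v t hm hlt => exact hlt
  | step v w t t' h hm hlt ih => omega

lemma jgt_label {lo : ℕ} {x v : Fin n} {ar : ℕ} (h : JGt L lo x v ar) :
    ∃ f t₁, t₁ ∈ L f ∧ lo < t₁ := by
  induction h with
  | single v t hm hlt => exact ⟨_, _, hm, hlt⟩
  | step v w t t' h hm hlt ih => exact ih

lemma jgt_trans {lo lo' : ℕ} {x y v : Fin n} {t₁ ar : ℕ}
    (h1 : JGt L lo x y t₁) (h2 : JGt L lo' y v ar) (hle : t₁ ≤ lo') :
    JGt L lo x v ar := by
  induction h2 with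
  | single w t hm hlt => exact JGt.step _ _ _ _ h1 hm (by omega)
  | step w z t t' h hm hlt ih => exact JGt.step _ _ _ _ ih hm hlt

lemma jgt_jto {lo : ℕ} {x v : Fin n} {ar : ℕ} (h : JGt L lo x v ar) (hle : t ≤ lo) :
    JTo (erase L e t) x v ar := by
  induction h with
  | single w t₁ hm hlt => exact JTo.single _ _ (mem_erase' (Or.inr (by omega)) hm)
  | step w z t₁ t' h hm hlt ih =>
      have := jgt_lt h
      exact JTo.step _ _ _ _ ih (mem_erase' (Or.inr (by omega)) hm) hlt

lemma jto_comp {u x v : Fin n} {r lo ar : ℕ}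
    (h1 : JTo (erase L e t) u x r) (h2 : JGt L lo x v ar) (hr : r ≤ lo) (ht : t ≤ lo) :
    JTo (erase L e t) u v ar := by
  induction h2 with
  | single w t₁ hm hlt => exact JTo.step _ _ _ _ h1 (mem_erase' (Or.inr (by omega)) hm) (by omega)
  | step w z t₁ t' h hm hlt ih =>
      have := jgt_lt h
      exact JTo.step _ _ _ _ ih (mem_erase' (Or.inr (by omega)) hm) hlt

lemma extract {u v : Fin n} {ar : ℕ} (hJ : JTo L u v ar) :
    ∀ e t, (¬ ∃ r, r ≤ ar ∧ JTo (erase L e t) u v r) →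
    ∃ x y, e = s(x, y) ∧ t ≤ ar ∧
      (x = u ∨ ∃ r, r < t ∧ JTo (erase L e t) u x r) ∧
      ((y = v ∧ t = ar) ∨ ∃ s', s' ≤ ar ∧ JGt L t y v s') := by
  induction hJ with
  | single w t₀ hm =>
      intro e t hne
      by_cases hc : s(u, w) = e ∧ t₀ = t
      · obtain ⟨hc1, hc2⟩ := hc
        subst hc2
        exact ⟨u, w, hc1.symm, le_rfl, Or.inl rfl, Or.inl ⟨rfl, rfl⟩⟩
      · exact absurd ⟨t₀, le_rfl, JTo.single _ _ (mem_erase' (not_and_or.1 hc) hm)⟩ hne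
  | step w z s₁ t' hJ harc hlt ih =>
      intro e t hne
      by_cases hc : s(w, z) = e ∧ t' = t
      · obtain ⟨hc1, hc2⟩ := hc
        subst hc2
        have hx : ∃ r, r ≤ s₁ ∧ JTo (erase L e t') u w r := by
          by_contra hno
          obtain ⟨x', y', _, hts, _, _⟩ := ih e t' hno
          omega
        obtain ⟨r, hr, hJr⟩ := hx
        exact ⟨w, z, hc1.symm, le_rfl, Or.inr ⟨r, by omega, hJr⟩, Or.inl ⟨rfl, rfl⟩⟩
      · have harc' : t' ∈ erase L e t s(w, z) := mem_erase' (not_and_or.1 hc) harc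
        have hno : ¬ ∃ r, r ≤ s₁ ∧ JTo (erase L e t) u w r := by
          rintro ⟨r, hr, hJr⟩
          exact hne ⟨t', le_rfl, JTo.step _ _ _ _ hJr harc' (by omega)⟩
        obtain ⟨x, y, he, hts, hpfx, hsuf⟩ := ih e t hno
        refine ⟨x, y, he, by omega, hpfx, ?_⟩
        rcases hsuf with ⟨rfl, rfl⟩ | ⟨s', hs', hG⟩
        · exact Or.inr ⟨t', le_rfl, JGt.single _ _ harc hlt⟩
        · exact Or.inr ⟨t', le_rfl, JGt.step _ _ _ _ hG harc (by omega)⟩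

lemma spec_of_necessary {e : Sym2 (Fin n)} {t : ℕ} (hN : Necessary L e t) :
    ∃ u v x y : Fin n, u ≠ v ∧ x ≠ v ∧ (∀ r, ¬ JTo (erase L e t) u v r) ∧
      (x = u ∨ ∃ r, r < t ∧ JTo (erase L e t) u x r) ∧
      e = s(x, y) ∧ (y = v ∨ ∃ s', JGt L t y v s') := by
  obtain ⟨u, v, hR, hnR⟩ := hN
  have huv : u ≠ v := fun h => hnR (Or.inl h)
  have hnJ : ∀ r, ¬ JTo (erase L e t) u v r := fun r hr => hnR (Or.inr ⟨r, hr⟩)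
  have hR' : u = v ∨ ∃ ar, JTo L u v ar := hR
  obtain ⟨ar, hJ⟩ := hR'.resolve_left huv
  obtain ⟨x, y, he, -, hpfx, hsuf⟩ := extract hJ e t (by rintro ⟨r, -, hr⟩; exact hnJ r hr)
  have hxv : x ≠ v := by
    rintro rfl
    rcases hpfx with rfl | ⟨r, -, hr⟩
    · exact huv rfl
    · exact hnJ r hr
  refine ⟨u, v, x, y, huv, hxv, hnJ, hpfx, he, ?_⟩
  rcases hsuf with ⟨h1, -⟩ | ⟨s', -, hG⟩
  · exact Or.inl h1
  · exact Or.inr ⟨s', hG⟩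

lemma spec_contra {u v x : Fin n} {ar : ℕ}
    (hnJ : ∀ r, ¬ JTo (erase L e t) u v r)
    (hpfx : x = u ∨ ∃ r, r < t ∧ JTo (erase L e t) u x r)
    (hG : JGt L t x v ar) : False := by
  rcases hpfx with rfl | ⟨r, hr, hJr⟩
  · exact hnJ ar (jgt_jto hG le_rfl)
  · exact hnJ ar (jto_comp hJr hG (by omega) le_rfl)

/-- The total number of labels of a minimal temporally connected proper temporal graph on
`n` vertices is at most `n² - n - 1`. -/
theorem stmt1 {n : ℕ} (L : TLabel n) (hL : NoLoops L) (hP : Proper L) (hTC : TC L)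
    (hMin : Minimal L) : cost L ≤ n ^ 2 - n - 1 := by
  classical
  by_cases h0 : cost L = 0
  · simp [h0]
  set S : Finset (Σ _ : Sym2 (Fin n), ℕ) := Finset.univ.sigma (fun e => L e) with hS
  have hScard : S.card = cost L := by
    rw [hS, Finset.card_sigma]; rfl
  have hSne : S.Nonempty := by
    rw [← Finset.card_pos, hScard]; omega
  have hmemS : ∀ p : (Σ _ : Sym2 (Fin n), ℕ), p ∈ S ↔ p.2 ∈ L p.1 := by
    intro p; rw [hS]; obtain ⟨a, b⟩ := p; simp [Finset.mem_sigma]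
  obtain ⟨p₀, hp₀⟩ := hSne
  obtain ⟨u₀', -⟩ := spec_of_necessary (hMin p₀.1 p₀.2 ((hmemS p₀).1 hp₀))
  haveI : Nonempty (Fin n) := ⟨u₀'⟩
  have hall : ∀ p : (Σ _ : Sym2 (Fin n), ℕ), ∃ u v x y : Fin n,
      p.2 ∈ L p.1 → (u ≠ v ∧ x ≠ v ∧ (∀ r, ¬ JTo (erase L p.1 p.2) u v r) ∧
        (x = u ∨ ∃ r, r < p.2 ∧ JTo (erase L p.1 p.2) u x r) ∧
        p.1 = s(x, y) ∧ (y = v ∨ ∃ s', JGt L p.2 y v s')) := by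
    intro p
    by_cases hm : p.2 ∈ L p.1
    · obtain ⟨u, v, x, y, h⟩ := spec_of_necessary (hMin p.1 p.2 hm)
      exact ⟨u, v, x, y, fun _ => h⟩
    · exact ⟨Classical.arbitrary _, Classical.arbitrary _, Classical.arbitrary _,
        Classical.arbitrary _, fun h => absurd h hm⟩
  choose U V X Y hspec using hall
  obtain ⟨pm, hpm, hmax⟩ := S.exists_max_image (fun p => p.2) ⟨p₀, hp₀⟩
  have hpmmem : pm.2 ∈ L pm.1 := (hmemS pm).1 hpm
  obtain ⟨hum, hxvm, hnJm, hpfxm, hem, hsufm⟩ := hspec pm hpmmem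
  have hym : Y pm = V pm := by
    rcases hsufm with h | ⟨s', hG⟩
    · exact h
    · exfalso
      obtain ⟨f, t₁, hmem, hlt⟩ := jgt_label hG
      have hin : (⟨f, t₁⟩ : Σ _ : Sym2 (Fin n), ℕ) ∈ S := (hmemS _).2 hmem
      have := hmax _ hin
      simp only at this
      omega
  have hem' : pm.1 = s(X pm, V pm) := by rw [hem, hym]
  have hba : ((V pm, X pm) : Fin n × Fin n) ∈ (Finset.univ : Finset (Fin n)).offDiag :=
    Finset.mem_offDiag.2 ⟨Finset.mem_univ _, Finset.mem_univ _, hxvm.symm⟩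
  set Tgt := ((Finset.univ : Finset (Fin n)).offDiag).erase (V pm, X pm) with hTgt
  have hTgtcard : Tgt.card = n ^ 2 - n - 1 := by
    rw [hTgt, Finset.card_erase_of_mem hba, Finset.offDiag_card]
    simp only [Finset.card_univ, Fintype.card_fin]
    rw [pow_two]
  have hmaps : ∀ p ∈ S, ((X p, V p) : Fin n × Fin n) ∈ Tgt := by
    intro p hp
    obtain ⟨hup, hxvp, hnJp, hpfxp, hep, hsufp⟩ := hspec p ((hmemS p).1 hp)
    rw [hTgt]
    refine Finset.mem_erase.2 ⟨?_,
      Finset.mem_offDiag.2 ⟨Finset.mem_univ _, Finset.mem_univ _, hxvp⟩⟩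
    intro heq
    rw [Prod.mk.injEq] at heq
    obtain ⟨hX, hV⟩ := heq
    by_cases hpq : p = pm
    · rw [hpq] at hX
      exact hxvm hX
    · have htle : p.2 ≤ pm.2 := hmax p hp
      have htlt : p.2 < pm.2 := by
        rcases lt_or_eq_of_le htle with h | h
        · exact h
        · exfalso
          by_cases hee : p.1 = pm.1
          · exact hpq (Sigma.ext hee (heq_of_eq h))
          · have hxp : V pm ∈ p.1 := by rw [hep, ← hX]; exact Sym2.mem_iff.2 (Or.inl rfl)
            have hxq : V pm ∈ pm.1 := by rw [hem']; exact Sym2.mem_iff.2 (Or.inr rfl)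
            have hdisj := hP p.1 pm.1 hee ⟨V pm, hxp, hxq⟩
            exact Finset.disjoint_left.1 hdisj ((hmemS p).1 hp)
              (by rw [h]; exact hpmmem)
      have hmemT : pm.2 ∈ L s(V pm, X pm) := by
        rw [Sym2.eq_swap, ← hem']
        exact hpmmem
      have hG : JGt L p.2 (V pm) (X pm) pm.2 := JGt.single _ _ hmemT htlt
      rw [← hX, ← hV] at hG
      exact spec_contra hnJp hpfxp hG
  have key : ∀ p ∈ S, ∀ q ∈ S, X p = X q → V p = V q → p.2 < q.2 → False := by
    intro p hp q hq hXX hVV hlt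
    obtain ⟨hup, hxvp, hnJp, hpfxp, hep, hsufp⟩ := hspec p ((hmemS p).1 hp)
    obtain ⟨huq, hxvq, hnJq, hpfxq, heq', hsufq⟩ := hspec q ((hmemS q).1 hq)
    have hmq : q.2 ∈ L s(X q, Y q) := by rw [← heq']; exact (hmemS q).1 hq
    have harc : JGt L p.2 (X q) (Y q) q.2 := JGt.single _ _ hmq hlt
    have hGfull : ∃ ar, JGt L p.2 (X q) (V q) ar := by
      rcases hsufq with h | ⟨s', hG⟩
      · exact ⟨q.2, by rw [← h]; exact harc⟩
      · exact ⟨s', jgt_trans harc hG le_rfl⟩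
    obtain ⟨ar, hG⟩ := hGfull
    rw [← hXX, ← hVV] at hG
    exact spec_contra hnJp hpfxp hG
  have hinj : Set.InjOn (fun p : (Σ _ : Sym2 (Fin n), ℕ) => ((X p, V p) : Fin n × Fin n)) S := by
    intro p hp q hq hfeq
    have hp' : p ∈ S := Finset.mem_coe.1 hp
    have hq' : q ∈ S := Finset.mem_coe.1 hq
    simp only [Prod.mk.injEq] at hfeq
    obtain ⟨hXX, hVV⟩ := hfeq
    by_contra hne
    have h2 : p.2 ≠ q.2 := by
      intro h2eq
      by_cases hee : p.1 = q.1
      · exact hne (Sigma.ext hee (heq_of_eq h2eq))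
      · obtain ⟨-, -, -, -, hep, -⟩ := hspec p ((hmemS p).1 hp')
        obtain ⟨-, -, -, -, heq', -⟩ := hspec q ((hmemS q).1 hq')
        have hxp : X p ∈ p.1 := by rw [hep]; exact Sym2.mem_iff.2 (Or.inl rfl)
        have hxq : X p ∈ q.1 := by rw [heq', ← hXX]; exact Sym2.mem_iff.2 (Or.inl rfl)
        have hdisj := hP p.1 q.1 hee ⟨X p, hxp, hxq⟩
        exact Finset.disjoint_left.1 hdisj ((hmemS p).1 hp')
          (by rw [h2eq]; exact (hmemS q).1 hq')
    rcases lt_or_gt_of_ne h2 with h | h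
    · exact key p hp' q hq' hXX hVV h
    · exact key q hq' p hp' hXX.symm hVV.symm h
  calc cost L = S.card := hScard.symm
    _ ≤ Tgt.card := Finset.card_le_card_of_injOn _ hmaps hinj
    _ = n ^ 2 - n - 1 := hTgtcard

end Temporal
end

section
/- In any minimal temporally connected proper temporal graph on n vertices, every edge carries at most n − 1 labels; that is, the maximum temporality τ⁺ is at most n − 1. -/
open Finset

namespace Temporal

variable {n : ℕ}

/-- Journeys as explicit step lists: each step records the next vertex and the time used. -/
inductive Jn (L : TLabel n) : Fin n → Fin n → List (Fin n × ℕ) → Prop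
  | nil (u : Fin n) : Jn L u u []
  | cons {u v : Fin n} (w : Fin n) {s : ℕ} {rest : List (Fin n × ℕ)} :
      s ∈ L s(u, w) → (∀ p ∈ rest, s < p.2) → Jn L w v rest → Jn L u v ((w, s) :: rest)

lemma mem_erase_of {L : TLabel n} {e f : Sym2 (Fin n)} {t s : ℕ}
    (hs : s ∈ L f) (h : f = e → s ≠ t) : s ∈ erase L e t f := by
  simp only [erase]
  split_ifs with hf
  · exact Finset.mem_erase.2 ⟨h hf, hs⟩
  · exact hs

lemma jn_append {L : TLabel n} {u v w : Fin n} {l₁ l₂ : List (Fin n × ℕ)}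
    (h₁ : Jn L u v l₁) (h₂ : Jn L v w l₂)
    (h : ∀ p ∈ l₁, ∀ q ∈ l₂, p.2 < q.2) : Jn L u w (l₁ ++ l₂) := by
  induction h₁ with
  | nil => simpa using h₂
  | @cons u' v' w' s rest hs hlt hrest ih =>
    refine Jn.cons w' hs ?_ (ih h₂ ?_)
    · intro p hp
      rcases List.mem_append.1 hp with hp | hp
      · exact hlt p hp
      · exact h (w', s) (by simp) p hp
    · intro p hp q hq
      exact h p (List.mem_cons_of_mem _ hp) q hq

lemma jn_ext {L : TLabel n} {u v : Fin n} {steps : List (Fin n × ℕ)}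
    (h : Jn L u v steps) : ∀ {u₀ : Fin n} {s : ℕ}, JTo L u₀ u s →
    (∀ p ∈ steps, s < p.2) → ∃ t, JTo L u₀ v t := by
  induction h with
  | nil => exact fun hj _ => ⟨_, hj⟩
  | @cons u' v' w' s rest hs hlt hrest ih =>
    intro u₀ s₀ hj hbound
    exact ih (JTo.step u' w' s₀ s hj hs (hbound (w', s) (by simp)))
      (fun p hp => hlt p hp)

lemma jn_reach {L : TLabel n} {u v : Fin n} {steps : List (Fin n × ℕ)}
    (h : Jn L u v steps) : Reach L u v := by
  cases h with
  | nil => exact Or.inl rfl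
  | @cons u' v' w' s rest hs hlt hrest =>
    exact Or.inr (jn_ext hrest (JTo.single w' s hs) hlt)

lemma jto_jn {L : TLabel n} {u v : Fin n} {t : ℕ} (h : JTo L u v t) :
    ∃ steps, (∀ p ∈ steps, p.2 ≤ t) ∧ Jn L u v steps := by
  induction h with
  | single w s hw =>
    exact ⟨[(w, s)], by simp, Jn.cons w hw (by simp) (Jn.nil w)⟩
  | step v' w' s s' hj hmem hlt ih =>
    obtain ⟨steps, hle, hjn⟩ := ih
    refine ⟨steps ++ [(w', s')], ?_, ?_⟩
    · intro p hp
      rcases List.mem_append.1 hp with hp | hp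
      · exact le_of_lt (lt_of_le_of_lt (hle p hp) hlt)
      · simp at hp; simp [hp]
    · exact jn_append hjn (Jn.cons w' hmem (by simp) (Jn.nil w'))
        (fun p hp q hq => by
          simp at hq
          rw [hq]
          exact lt_of_le_of_lt (hle p hp) hlt)

lemma jn_erase {L : TLabel n} {e : Sym2 (Fin n)} {t : ℕ} {u v : Fin n}
    {steps : List (Fin n × ℕ)} (h : Jn L u v steps)
    (ht : ∀ p ∈ steps, p.2 ≠ t) : Jn (erase L e t) u v steps := by
  induction h with
  | nil => exact Jn.nil _
  | @cons u' v' w' s rest hs hlt hrest ih =>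
    exact Jn.cons w' (mem_erase_of hs (fun _ => ht (w', s) (by simp)))
      hlt (ih (fun p hp => ht p (List.mem_cons_of_mem _ hp)))

lemma jn_decomp {L : TLabel n} {e : Sym2 (Fin n)} {t : ℕ} :
    ∀ {u v : Fin n} {steps : List (Fin n × ℕ)} {T : ℕ}, Jn L u v steps →
    (∀ p ∈ steps, T ≤ p.2) →
    (∀ steps', (∀ p ∈ steps', T ≤ p.2) → ¬ Jn (erase L e t) u v steps') →
    ∃ x y pre suf, s(x, y) = e ∧ steps = pre ++ (y, t) :: suf ∧
      Jn L u x pre ∧ (∀ p ∈ pre, p.2 < t) ∧ Jn L y v suf ∧ (∀ p ∈ suf, t < p.2) := by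
  intro u v steps T hjn
  induction hjn generalizing T with
  | nil =>
    intro _ hblock
    exact absurd (Jn.nil _) (hblock [] (by simp))
  | @cons u' v' w' s rest hs hlt hrest ih =>
    intro hT hblock
    by_cases hc : s = t ∧ s(u', w') = e
    · obtain ⟨rfl, hc2⟩ := hc
      exact ⟨u', w', [], rest, hc2, by simp, Jn.nil u', by simp, hrest, hlt⟩
    · have hsur : s ∈ erase L e t s(u', w') :=
        mem_erase_of hs (fun hf hst => hc ⟨hst, hf⟩)
      have hblock' : ∀ steps', (∀ p ∈ steps', s + 1 ≤ p.2) →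
          ¬ Jn (erase L e t) w' v' steps' := by
        intro steps' hge hjn'
        refine hblock ((w', s) :: steps') ?_ (Jn.cons w' hsur (fun p hp => hge p hp) hjn')
        intro p hp
        rcases List.mem_cons.1 hp with rfl | hp
        · exact hT (w', s) (by simp)
        · exact le_trans (le_trans (hT (w', s) (by simp)) (Nat.le_succ s)) (hge p hp)
      obtain ⟨x, y, pre', suf, hxy, heq, hpre, hpret, hsuf, hsuft⟩ :=
        ih (fun p hp => hlt p hp) hblock'
      have hst : s < t := by
        have : (y, t) ∈ rest := by rw [heq]; simp
        simpa using hlt (y, t) this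
      refine ⟨x, y, (w', s) :: pre', suf, hxy, by rw [heq]; simp, ?_, ?_, hsuf, hsuft⟩
      · refine Jn.cons w' hs ?_ hpre
        intro p hp
        exact hlt p (by rw [heq]; exact List.mem_append.2 (Or.inl hp))
      · intro p hp
        rcases List.mem_cons.1 hp with rfl | hp
        · exact hst
        · exact hpret p hp

lemma extract_s2 {L : TLabel n} (hMin : Minimal L) {e : Sym2 (Fin n)} {t : ℕ}
    (ht : t ∈ L e) :
    ∃ u v x y pre suf, ¬ Reach (erase L e t) u v ∧ s(x, y) = e ∧
      Jn L u x pre ∧ (∀ p ∈ pre, p.2 < t) ∧ Jn L y v suf ∧ (∀ p ∈ suf, t < p.2) := by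
  obtain ⟨u, v, hr, hnr⟩ := hMin e t ht
  have huv : u ≠ v := fun h => hnr (Or.inl h)
  obtain ⟨t₀, hj⟩ := hr.resolve_left huv
  obtain ⟨steps, _, hjn⟩ := jto_jn hj
  have hblock : ∀ steps', (∀ p ∈ steps', 0 ≤ p.2) →
      ¬ Jn (erase L e t) u v steps' := fun _ _ hjn' => hnr (jn_reach hjn')
  obtain ⟨x, y, pre, suf, hxy, -, hpre, hpret, hsuf, hsuft⟩ :=
    jn_decomp hjn (fun p _ => Nat.zero_le _) hblock
  exact ⟨u, v, x, y, pre, suf, hnr, hxy, hpre, hpret, hsuf, hsuft⟩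

/-- In a minimal temporally connected proper temporal graph on `n` vertices, every edge
carries at most `n - 1` labels. -/
theorem stmt2 {n : ℕ} (L : TLabel n) (hL : NoLoops L) (hP : Proper L) (hTC : TC L)
    (hMin : Minimal L) : ∀ e : Sym2 (Fin n), (L e).card ≤ n - 1 := by
  intro e
  induction e using Sym2.ind with
  | _ a b =>
  by_cases hab : a = b
  · subst hab
    simp [hL a]
  · rcases Finset.eq_empty_or_nonempty (L s(a, b)) with hemp | hne
    · simp [hemp]
    · have h2n : 2 ≤ n := by
        have h1 := a.isLt
        have h2 := b.isLt
        have h3 : a.val ≠ b.val := fun h => hab (Fin.ext h)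
        omega
      have hch : ∀ t : ℕ, ∃ u v x y : Fin n, ∃ pre suf : List (Fin n × ℕ),
          t ∈ L s(a, b) → (¬ Reach (erase L s(a, b) t) u v ∧ s(x, y) = s(a, b) ∧
            Jn L u x pre ∧ (∀ p ∈ pre, p.2 < t) ∧ Jn L y v suf ∧
            (∀ p ∈ suf, t < p.2)) := by
        intro t
        by_cases ht : t ∈ L s(a, b)
        · obtain ⟨u, v, x, y, pre, suf, h⟩ := extract_s2 hMin ht
          exact ⟨u, v, x, y, pre, suf, fun _ => h⟩
        · exact ⟨a, a, a, a, [], [], fun h => absurd h ht⟩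
      choose U V X Y PRE SUF H using hch
      -- Key claim: for `t₁ < t₂` both labels of the edge, the witness target `V t₁` is
      -- distinct from `V t₂`, `a` and `b`.
      have key : ∀ t₁ t₂ : ℕ, t₁ ∈ L s(a, b) → t₂ ∈ L s(a, b) → t₁ < t₂ →
          V t₁ ≠ V t₂ ∧ V t₁ ≠ a ∧ V t₁ ≠ b := by
        intro t₁ t₂ h₁ h₂ hlt
        obtain ⟨hnr₁, hxy₁, hpre₁, hpret₁, hsuf₁, hsuft₁⟩ := H t₁ h₁
        obtain ⟨hnr₂, hxy₂, hpre₂, hpret₂, hsuf₂, hsuft₂⟩ := H t₂ h₂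
        -- `V t₁ ≠ X t₁` : the prefix journey already reaches `X t₁` avoiding `(e,t₁)`.
        have cx : V t₁ ≠ X t₁ := by
          intro hvx
          have hj : Jn (erase L s(a, b) t₁) (U t₁) (X t₁) (PRE t₁) :=
            jn_erase hpre₁ (fun p hp => Nat.ne_of_lt (hpret₁ p hp))
          rw [← hvx] at hj
          exact hnr₁ (jn_reach hj)
        -- `V t₁ ≠ Y t₁` : cross at `t₂` instead.
        have cy : V t₁ ≠ Y t₁ := by
          intro hvy
          have hstep : Jn L (X t₁) (Y t₁) [(Y t₁, t₂)] := by
            refine Jn.cons (Y t₁) ?_ (by simp) (Jn.nil _)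
            rw [hxy₁]; exact h₂
          have hjoin : Jn L (U t₁) (Y t₁) (PRE t₁ ++ [(Y t₁, t₂)]) :=
            jn_append hpre₁ hstep (by
              intro p hp q hq
              simp at hq
              rw [hq]
              exact lt_trans (hpret₁ p hp) hlt)
          have hj : Jn (erase L s(a, b) t₁) (U t₁) (Y t₁) (PRE t₁ ++ [(Y t₁, t₂)]) := by
            refine jn_erase hjoin ?_
            intro p hp
            rcases List.mem_append.1 hp with hp | hp
            · exact Nat.ne_of_lt (hpret₁ p hp)
            · simp at hp
              rw [hp]
              omega
          rw [← hvy] at hj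
          exact hnr₁ (jn_reach hj)
        constructor
        · -- injectivity
          intro hv
          -- how the two crossings relate
          have hee : s(X t₁, Y t₁) = s(X t₂, Y t₂) := by rw [hxy₁, hxy₂]
          have htime : ∀ p ∈ PRE t₁, ∀ q ∈ (Y t₂, t₂) :: SUF t₂, p.2 < q.2 := by
            intro p hp q hq
            rcases List.mem_cons.1 hq with rfl | hq
            · exact lt_trans (hpret₁ p hp) hlt
            · exact lt_trans (lt_trans (hpret₁ p hp) hlt) (hsuft₂ q hq)
          have havoid : ∀ p ∈ PRE t₁ ++ (Y t₂, t₂) :: SUF t₂, p.2 ≠ t₁ := by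
            intro p hp
            rcases List.mem_append.1 hp with hp | hp
            · exact Nat.ne_of_lt (hpret₁ p hp)
            · rcases List.mem_cons.1 hp with rfl | hp
              · simp; omega
              · have := hsuft₂ p hp; omega
          rcases Sym2.eq_iff.1 hee with ⟨hx, hy⟩ | ⟨hx, hy⟩
          · -- same direction: prefix₁, cross at t₂, suffix₂
            have hstep : Jn L (X t₁) (V t₁) ((Y t₂, t₂) :: SUF t₂) := by
              refine Jn.cons (Y t₂) ?_ hsuft₂ ?_
              · rw [hx, hxy₂]; exact h₂
              · rw [hv]; exact hsuf₂
            exact hnr₁ (jn_reach (jn_erase (jn_append hpre₁ hstep htime) havoid))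
          · -- opposite direction: prefix₁ then suffix₂ from `Y t₂ = X t₁`
            have hsuf₂' : Jn L (X t₁) (V t₁) (SUF t₂) := by
              rw [hx, hv]; exact hsuf₂
            refine hnr₁ (jn_reach (jn_erase (jn_append hpre₁ hsuf₂' ?_) ?_))
            · intro p hp q hq
              exact lt_trans (lt_trans (hpret₁ p hp) hlt) (hsuft₂ q hq)
            · intro p hp
              rcases List.mem_append.1 hp with hp | hp
              · exact Nat.ne_of_lt (hpret₁ p hp)
              · have := hsuft₂ p hp; omega
        · -- V t₁ avoids both endpoints
          rcases Sym2.eq_iff.1 hxy₁ with ⟨hx, hy⟩ | ⟨hx, hy⟩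
          · exact ⟨hx ▸ cx, hy ▸ cy⟩
          · exact ⟨hy ▸ cy, hx ▸ cx⟩
      set m := (L s(a, b)).max' hne with hm
      have hmmem : m ∈ L s(a, b) := (L s(a, b)).max'_mem hne
      have himg : (L s(a, b)).image V ⊆
          insert (V m) ((univ : Finset (Fin n)) \ {a, b}) := by
        intro w hw
        obtain ⟨t, ht, rfl⟩ := Finset.mem_image.1 hw
        by_cases htm : t = m
        · rw [htm]; exact Finset.mem_insert_self _ _
        · have htlt : t < m := lt_of_le_of_ne ((L s(a, b)).le_max' t ht) htm
          obtain ⟨_, hva, hvb⟩ := key t m ht hmmem htlt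
          refine Finset.mem_insert_of_mem ?_
          simp [hva, hvb]
      have hinj : Set.InjOn V (L s(a, b)) := by
        intro t₁ h₁ t₂ h₂ hV
        by_contra hne'
        rcases lt_or_gt_of_ne hne' with h | h
        · exact (key t₁ t₂ h₁ h₂ h).1 hV
        · exact (key t₂ t₁ h₂ h₁ h).1 hV.symm
      have hcard2 : ((univ : Finset (Fin n)) \ {a, b}).card = n - 2 := by
        rw [Finset.card_sdiff_of_subset (by simp)]
        simp [Finset.card_pair hab]
      calc (L s(a, b)).card = ((L s(a, b)).image V).card :=
            (Finset.card_image_of_injOn hinj).symm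
        _ ≤ (insert (V m) ((univ : Finset (Fin n)) \ {a, b})).card :=
            Finset.card_le_card himg
        _ ≤ ((univ : Finset (Fin n)) \ {a, b}).card + 1 := Finset.card_insert_le _ _
        _ ≤ n - 1 := by rw [hcard2]; omega

end Temporal
end

section
/- For any bridge edge e of a graph G and any minimal proper labelling λ making (G, λ) temporally connected, λ assigns at most two labels to e. -/
open Finset

namespace Temporal

variable {n : ℕ}

/-! ### Auxiliary development for `stmt3` -/

section Aux

variable {G : SimpleGraph (Fin n)} {L M : TLabel n} {e : Sym2 (Fin n)} {x y : Fin n}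

/-- The graph with edge `e` deleted. -/
def Gd (G : SimpleGraph (Fin n)) (e : Sym2 (Fin n)) : SimpleGraph (Fin n) :=
  G \ SimpleGraph.fromEdgeSet {e}

/-- A journey starting at `u` "at time `t0`": all labels strictly above `t0`;
`JA M t0 u w s` means one can be at `w` at time `s`. -/
inductive JA (M : TLabel n) (t0 : ℕ) (u : Fin n) : Fin n → ℕ → Prop
  | nil : JA M t0 u u t0
  | step {v w : Fin n} {t t' : ℕ} : JA M t0 u v t → t < t' → t' ∈ M s(v, w) → JA M t0 u w t'

theorem JA.le_arr {t0 : ℕ} {u v : Fin n} {t : ℕ} (h : JA M t0 u v t) : t0 ≤ t := by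
  induction h with
  | nil => exact le_rfl
  | step _ hlt _ ih => exact ih.trans hlt.le

theorem JA.relax {t0 t1 : ℕ} {u v : Fin n} {t : ℕ} (h1 : t1 ≤ t0) (h : JA M t0 u v t) :
    (v = u ∧ t = t0) ∨ JA M t1 u v t := by
  induction h with
  | nil => exact Or.inl ⟨rfl, rfl⟩
  | step _ hlt hm ih =>
    refine Or.inr ?_
    rcases ih with ⟨rfl, rfl⟩ | j
    · exact JA.step JA.nil (lt_of_le_of_lt h1 hlt) hm
    · exact j.step hlt hm

/-- `u` can be at `x` strictly before time `t`. -/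
def Pp (M : TLabel n) (x u : Fin n) (t : ℕ) : Prop := u = x ∨ ∃ a < t, JTo M u x a

/-- Starting from `y` strictly after time `t` one can reach `v`. -/
def Qq (M : TLabel n) (y v : Fin n) (t : ℕ) : Prop := ∃ s, JA M t y v s

theorem Pp.mono {u : Fin n} {t t' : ℕ} (h : Pp M x u t) (hle : t ≤ t') : Pp M x u t' := by
  rcases h with h | ⟨a, ha, j⟩
  · exact Or.inl h
  · exact Or.inr ⟨a, lt_of_lt_of_le ha hle, j⟩

theorem Qq.mono {v : Fin n} {t t' : ℕ} (h : Qq M y v t') (hle : t ≤ t') : Qq M y v t := by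
  obtain ⟨s, hja⟩ := h
  rcases hja.relax hle with ⟨rfl, _⟩ | j
  · exact ⟨t, JA.nil⟩
  · exact ⟨s, j⟩

theorem jto_of_ja {u v : Fin n} {t s : ℕ} (h : JTo M u y t) (hja : JA M t y v s) :
    JTo M u v s ∨ (v = y ∧ s = t) := by
  induction hja with
  | nil => exact Or.inr ⟨rfl, rfl⟩
  | step _ hlt hm ih =>
    refine Or.inl ?_
    rcases ih with j | ⟨rfl, rfl⟩
    · exact JTo.step _ _ _ _ j hm hlt
    · exact JTo.step _ _ _ _ h hm hlt

theorem compose {u v : Fin n} {t : ℕ} (he2 : e = s(x, y)) (ht : t ∈ M e) (hp : Pp M x u t)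
    (hq : Qq M y v t) : Reach M u v := by
  have hm : t ∈ M s(x, y) := by rw [← he2]; exact ht
  have huy : JTo M u y t := by
    rcases hp with rfl | ⟨a, ha, j⟩
    · exact JTo.single y t hm
    · exact JTo.step x y a t j hm ha
  obtain ⟨s, hja⟩ := hq
  rcases jto_of_ja huy hja with j | ⟨rfl, _⟩
  · exact Or.inr ⟨s, j⟩
  · exact Or.inr ⟨t, huy⟩

theorem crossing {p q : Fin n} (he2 : e = s(x, y)) (heq : s(p, q) = e) :
    (p = x ∧ q = y) ∨ (p = y ∧ q = x) := by
  rw [he2] at heq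
  exact Sym2.eq_iff.mp heq

theorem side_adj (hS : SupportedOn L G) (hsub : ∀ f, M f ⊆ L f) {p q : Fin n} {t : ℕ}
    (hm : t ∈ M s(p, q)) (hne : s(p, q) ≠ e) : (Gd G e).Adj p q := by
  have h1 : s(p, q) ∈ G.edgeSet := hS _ (Finset.ne_empty_of_mem (hsub _ hm))
  have h2 : G.Adj p q := G.mem_edgeSet.mp h1
  simp only [Gd, SimpleGraph.sdiff_adj, SimpleGraph.fromEdgeSet_adj, Set.mem_singleton_iff]
  exact ⟨h2, fun h => hne h.1⟩

theorem disj_sides (hsep : ¬ (Gd G e).Reachable x y) {u : Fin n}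
    (h1 : (Gd G e).Reachable x u) (h2 : (Gd G e).Reachable y u) : False :=
  hsep (h1.trans h2.symm)

theorem jto_reachable (hS : SupportedOn L G) {u v : Fin n} {t : ℕ} (h : JTo L u v t) :
    G.Reachable u v := by
  induction h with
  | single v t hm =>
    exact (G.mem_edgeSet.mp (hS _ (Finset.ne_empty_of_mem hm))).reachable
  | step v w t t' _ hm _ ih =>
    exact ih.trans (G.mem_edgeSet.mp (hS _ (Finset.ne_empty_of_mem hm))).reachable

theorem step_one (he2 : e = s(x, y)) {a c : Fin n} (hadj : G.Adj a c)
    (ha : (Gd G e).Reachable x a ∨ (Gd G e).Reachable y a) :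
    (Gd G e).Reachable x c ∨ (Gd G e).Reachable y c := by
  by_cases hc : s(a, c) = e
  · rcases crossing he2 hc with ⟨rfl, rfl⟩ | ⟨rfl, rfl⟩
    · exact Or.inr (SimpleGraph.Reachable.refl _)
    · exact Or.inl (SimpleGraph.Reachable.refl _)
  · have hadj' : (Gd G e).Adj a c := by
      simp only [Gd, SimpleGraph.sdiff_adj, SimpleGraph.fromEdgeSet_adj, Set.mem_singleton_iff]
      exact ⟨hadj, fun h => hc h.1⟩
    exact ha.imp (fun h => h.trans hadj'.reachable) (fun h => h.trans hadj'.reachable)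

theorem walk_side (he2 : e = s(x, y)) {a b : Fin n} (p : G.Walk a b) :
    ((Gd G e).Reachable x a ∨ (Gd G e).Reachable y a) →
      (Gd G e).Reachable x b ∨ (Gd G e).Reachable y b := by
  induction p with
  | nil => exact id
  | cons hadj _ ih => exact fun ha => ih (step_one he2 hadj ha)

theorem side_total (hS : SupportedOn L G) (hTC : TC L) (he2 : e = s(x, y)) (u : Fin n) :
    (Gd G e).Reachable x u ∨ (Gd G e).Reachable y u := by
  rcases hTC x u with heq | ⟨t, hj⟩
  · exact heq ▸ Or.inl (SimpleGraph.Reachable.refl x)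
  · obtain ⟨p⟩ := jto_reachable hS hj
    exact walk_side he2 p (Or.inl (SimpleGraph.Reachable.refl x))

/-- Decomposition: a journey from the `x`-side to the `y`-side crosses the bridge. -/
theorem decompTo (hS : SupportedOn L G) (hsub : ∀ f, M f ⊆ L f) (he2 : e = s(x, y))
    (hsep : ¬ (Gd G e).Reachable x y) {u w : Fin n} {s : ℕ}
    (hu : (Gd G e).Reachable x u) (hj : JTo M u w s) :
    (Gd G e).Reachable y w → ∃ t ∈ M e, Pp M x u t ∧ JA M t y w s := by
  induction hj with
  | single v t hm =>
    intro hv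
    by_cases hc : s(u, v) = e
    · rcases crossing he2 hc with ⟨hux, hvy⟩ | ⟨huy, _⟩
      · subst hux; subst hvy
        exact ⟨t, by rwa [← hc], Or.inl rfl, JA.nil⟩
      · subst huy; exact absurd hu hsep
    · exact absurd (hu.trans (side_adj hS hsub hm hc).reachable) fun h => disj_sides hsep h hv
  | step v w t t' hjs hm hlt ih =>
    intro hw
    by_cases hc : s(v, w) = e
    · rcases crossing he2 hc with ⟨hvx, hwy⟩ | ⟨_, hwx⟩
      · subst hvx; subst hwy
        exact ⟨t', by rwa [← hc], Or.inr ⟨t, hlt, hjs⟩, JA.nil⟩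
      · subst hwx; exact absurd hw.symm hsep
    · have hv : (Gd G e).Reachable y v := hw.trans (side_adj hS hsub hm hc).reachable.symm
      obtain ⟨t0, ht0, hp, hja⟩ := ih hv
      exact ⟨t0, ht0, hp, hja.step hlt hm⟩

/-- Purification of plain journeys: a journey staying (endpoint-wise) on the `x`-side can
avoid using any label of the bridge, hence survives in any `M` agreeing with `L` off `e`. -/
theorem purifyTo (hS : SupportedOn L G) (hMe : ∀ f, f ≠ e → M f = L f) (he2 : e = s(x, y))
    (hsep : ¬ (Gd G e).Reachable x y) {u w : Fin n} {s : ℕ}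
    (hu : (Gd G e).Reachable x u) (hj : JTo L u w s) :
    ((Gd G e).Reachable x w → u = w ∨ ∃ s' ≤ s, JTo M u w s') ∧
      ((Gd G e).Reachable y w → u = x ∨ ∃ a < s, JTo M u x a) := by
  induction hj with
  | single v t hm =>
    constructor
    · intro hv
      by_cases hc : s(u, v) = e
      · rcases crossing he2 hc with ⟨_, hvy⟩ | ⟨huy, _⟩
        · subst hvy; exact absurd hv hsep
        · subst huy; exact absurd hu hsep
      · refine Or.inr ⟨t, le_rfl, JTo.single v t ?_⟩
        rw [hMe _ hc]; exact hm
    · intro hv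
      by_cases hc : s(u, v) = e
      · rcases crossing he2 hc with ⟨hux, _⟩ | ⟨huy, _⟩
        · exact Or.inl hux
        · subst huy; exact absurd hu hsep
      · exact absurd (hu.trans (side_adj hS (fun f => subset_rfl) hm hc).reachable)
          fun h => disj_sides hsep h hv
  | step v w t t' hjs hm hlt ih =>
    constructor
    · intro hw
      by_cases hc : s(v, w) = e
      · rcases crossing he2 hc with ⟨_, hwy⟩ | ⟨hvy, hwx⟩
        · subst hwy; exact absurd hw hsep
        · subst hvy; subst hwx
          rcases ih.2 (SimpleGraph.Reachable.refl _) with hux | ⟨a, ha, j⟩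
          · exact Or.inl hux
          · exact Or.inr ⟨a, (ha.trans hlt).le, j⟩
      · have hv : (Gd G e).Reachable x v :=
          hw.trans (side_adj hS (fun f => subset_rfl) hm hc).reachable.symm
        rcases ih.1 hv with rfl | ⟨s', hs', j⟩
        · refine Or.inr ⟨t', le_rfl, JTo.single w t' ?_⟩
          rw [hMe _ hc]; exact hm
        · refine Or.inr ⟨t', le_rfl, JTo.step v w s' t' j ?_ (lt_of_le_of_lt hs' hlt)⟩
          rw [hMe _ hc]; exact hm
    · intro hw
      by_cases hc : s(v, w) = e
      · rcases crossing he2 hc with ⟨hvx, _⟩ | ⟨_, hwx⟩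
        · subst hvx
          rcases ih.1 (SimpleGraph.Reachable.refl _) with rfl | ⟨s', hs', j⟩
          · exact Or.inl rfl
          · exact Or.inr ⟨s', lt_of_le_of_lt hs' hlt, j⟩
        · subst hwx; exact absurd hw.symm hsep
      · have hv : (Gd G e).Reachable y v :=
          hw.trans (side_adj hS (fun f => subset_rfl) hm hc).reachable.symm
        rcases ih.2 hv with hux | ⟨a, ha, j⟩
        · exact Or.inl hux
        · exact Or.inr ⟨a, ha.trans hlt, j⟩

/-- Purification of time-bounded journeys. -/
theorem purifyJA (hS : SupportedOn L G) (hMe : ∀ f, f ≠ e → M f = L f) (he2 : e = s(x, y))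
    (hsep : ¬ (Gd G e).Reachable x y) {t0 : ℕ} {u w : Fin n} {s : ℕ}
    (hu : (Gd G e).Reachable x u) (hj : JA L t0 u w s) :
    ((Gd G e).Reachable x w → ∃ s' ≤ s, JA M t0 u w s') ∧
      ((Gd G e).Reachable y w → u = x ∨ ∃ a < s, JA M t0 u x a) := by
  induction hj with
  | nil =>
    exact ⟨fun _ => ⟨t0, le_rfl, JA.nil⟩, fun hw => absurd hu fun h => disj_sides hsep h hw⟩
  | @step v w t t' hjs hlt hm ih =>
    constructor
    · intro hw
      by_cases hc : s(v, w) = e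
      · rcases crossing he2 hc with ⟨_, hwy⟩ | ⟨hvy, hwx⟩
        · subst hwy; exact absurd hw hsep
        · subst hvy; subst hwx
          rcases ih.2 (SimpleGraph.Reachable.refl _) with hux | ⟨a, ha, j⟩
          · subst hux
            exact ⟨t0, le_of_lt (lt_of_le_of_lt hjs.le_arr hlt), JA.nil⟩
          · exact ⟨a, (ha.trans hlt).le, j⟩
      · have hv : (Gd G e).Reachable x v :=
          hw.trans (side_adj hS (fun f => subset_rfl) hm hc).reachable.symm
        obtain ⟨s', hs', j⟩ := ih.1 hv
        refine ⟨t', le_rfl, j.step (lt_of_le_of_lt hs' hlt) ?_⟩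
        rw [hMe _ hc]; exact hm
    · intro hw
      by_cases hc : s(v, w) = e
      · rcases crossing he2 hc with ⟨hvx, _⟩ | ⟨_, hwx⟩
        · subst hvx
          obtain ⟨s', hs', j⟩ := ih.1 (SimpleGraph.Reachable.refl _)
          exact Or.inr ⟨s', lt_of_le_of_lt hs' hlt, j⟩
        · subst hwx; exact absurd hw.symm hsep
      · have hv : (Gd G e).Reachable y v :=
          hw.trans (side_adj hS (fun f => subset_rfl) hm hc).reachable.symm
        rcases ih.2 hv with hux | ⟨a, ha, j⟩
        · exact Or.inl hux
        · exact Or.inr ⟨a, ha.trans hlt, j⟩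

/-- Orientation witness: the necessity of label `t` is witnessed by a pair going from the
`x`-side to the `y`-side, recording the two "interval" facts we need. -/
def Wit (L : TLabel n) (G : SimpleGraph (Fin n)) (e : Sym2 (Fin n)) (x y : Fin n) (t : ℕ) :
    Prop :=
  ∃ u v, (Gd G e).Reachable x u ∧ (Gd G e).Reachable y v ∧
    (∀ t' ∈ L e, t' < t → ¬ Pp L x u t') ∧ (∀ t' ∈ L e, t < t' → ¬ Qq L y v t')

theorem wit_of_pair (hS : SupportedOn L G) (he2 : e = s(x, y))
    (hsep : ¬ (Gd G e).Reachable x y) {t : ℕ} {u v : Fin n} {s : ℕ}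
    (hu : (Gd G e).Reachable x u) (hv : (Gd G e).Reachable y v) (hj : JTo L u v s)
    (hnr : ¬ Reach (Temporal.erase L e t) u v) : Wit L G e x y t := by
  set L' := Temporal.erase L e t with hL'
  have hMe : ∀ f, f ≠ e → L' f = L f := fun f hf => if_neg hf
  have he2' : e = s(y, x) := he2.trans (Sym2.eq_swap)
  have hsep' : ¬ (Gd G e).Reachable y x := fun h => hsep h.symm
  -- a `P`/`Q` pair at any label other than `t` would survive in `L'`
  have hPQ : ∀ t' ∈ L e, t' ≠ t → ¬ (Pp L x u t' ∧ Qq L y v t') := by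
    rintro t' ht' hne' ⟨hp, hq⟩
    apply hnr
    have hp' : Pp L' x u t' := by
      rcases hp with hux | ⟨a, ha, j⟩
      · exact Or.inl hux
      · rcases (purifyTo hS hMe he2 hsep hu j).1 (SimpleGraph.Reachable.refl x) with hux |
          ⟨a', ha', j'⟩
        · exact Or.inl hux
        · exact Or.inr ⟨a', lt_of_le_of_lt ha' ha, j'⟩
    have hq' : Qq L' y v t' := by
      obtain ⟨s0, hja⟩ := hq
      obtain ⟨s1, _, hja'⟩ :=
        (purifyJA (x := y) (y := x) hS hMe he2' hsep' (SimpleGraph.Reachable.refl y) hja).1 hv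
      exact ⟨s1, hja'⟩
    have ht'' : t' ∈ L' e := by
      have hE : L' e = (L e).erase t := if_pos rfl
      rw [hE]
      exact Finset.mem_erase.mpr ⟨hne', ht'⟩
    exact compose he2 ht'' hp' hq'
  -- decompose the given journey: its crossing label must be `t`
  obtain ⟨t0, ht0, hp0, hja0⟩ := decompTo hS (fun f => subset_rfl) he2 hsep hu hj hv
  have ht0t : t0 = t := by
    by_contra hne'
    exact hPQ t0 ht0 hne' ⟨hp0, ⟨s, hja0⟩⟩
  subst ht0t
  refine ⟨u, v, hu, hv, ?_, ?_⟩
  · intro t' ht' hlt hp'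
    exact hPQ t' ht' hlt.ne ⟨hp', Qq.mono ⟨s, hja0⟩ hlt.le⟩
  · intro t' ht' hlt hq'
    exact hPQ t' ht' hlt.ne' ⟨Pp.mono hp0 hlt.le, hq'⟩

theorem necessary_wit (hS : SupportedOn L G) (hTC : TC L) (he2 : e = s(x, y))
    (hsep : ¬ (Gd G e).Reachable x y) {t : ℕ} (hnec : Necessary L e t) :
    Wit L G e x y t ∨ Wit L G e y x t := by
  obtain ⟨u, v, hr, hnr⟩ := hnec
  have hMe : ∀ f, f ≠ e → Temporal.erase L e t f = L f := fun f hf => if_neg hf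
  have he2' : e = s(y, x) := he2.trans (Sym2.eq_swap)
  have hsep' : ¬ (Gd G e).Reachable y x := fun h => hsep h.symm
  have hne : u ≠ v := fun h => hnr (Or.inl h)
  obtain ⟨s, hj⟩ := hr.resolve_left hne
  rcases side_total hS hTC he2 u with hu | hu <;> rcases side_total hS hTC he2 v with hv | hv
  · rcases (purifyTo hS hMe he2 hsep hu hj).1 hv with h | ⟨s', _, j⟩
    · exact absurd h hne
    · exact absurd (Or.inr ⟨s', j⟩) hnr
  · exact Or.inl (wit_of_pair hS he2 hsep hu hv hj hnr)
  · exact Or.inr (wit_of_pair (x := y) (y := x) hS he2' hsep' hu hv hj hnr)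
  · rcases (purifyTo (x := y) (y := x) hS hMe he2' hsep' hu hj).1 hv with h | ⟨s', _, j⟩
    · exact absurd h hne
    · exact absurd (Or.inr ⟨s', j⟩) hnr

/-- Two distinct labels of the bridge cannot both have witnesses of the same orientation. -/
theorem no_two (hS : SupportedOn L G) (hTC : TC L) (he2 : e = s(x, y))
    (hsep : ¬ (Gd G e).Reachable x y) {t t' : ℕ} (htt' : t < t')
    (h1 : Wit L G e x y t) (h2 : Wit L G e x y t') : False := by
  obtain ⟨u1, v1, hu1, hv1, _, hQ1⟩ := h1
  obtain ⟨u2, v2, hu2, hv2, hP2, _⟩ := h2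
  have hne : u2 ≠ v1 := fun h => disj_sides hsep hu2 (h ▸ hv1)
  obtain ⟨s, hj⟩ := (hTC u2 v1).resolve_left hne
  obtain ⟨t0, ht0, hp0, hja0⟩ := decompTo hS (fun f => subset_rfl) he2 hsep hu2 hj hv1
  rcases lt_or_ge t0 t' with h | h
  · exact hP2 t0 ht0 h hp0
  · exact hQ1 t0 ht0 (lt_of_lt_of_le htt' h) ⟨s, hja0⟩

theorem no_two' (hS : SupportedOn L G) (hTC : TC L) (he2 : e = s(x, y))
    (hsep : ¬ (Gd G e).Reachable x y) {t t' : ℕ} (htt' : t ≠ t')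
    (h1 : Wit L G e x y t) (h2 : Wit L G e x y t') : False := by
  rcases htt'.lt_or_gt with h | h
  · exact no_two hS hTC he2 hsep h h1 h2
  · exact no_two hS hTC he2 hsep h h2 h1

end Aux

/-- A bridge edge of the underlying graph carries at most two labels in any minimal proper
temporally connected labelling. -/
theorem stmt3 {n : ℕ} (G : SimpleGraph (Fin n)) (L : TLabel n) (hS : SupportedOn L G)
    (hP : Proper L) (hTC : TC L) (hMin : Minimal L) (e : Sym2 (Fin n))
    (he : G.IsBridge e) : (L e).card ≤ 2 := by
  induction e using Sym2.ind with
  | _ x y =>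
  rw [SimpleGraph.isBridge_iff] at he
  have hsep := he
  have hsep : ¬ (Gd G s(x, y)).Reachable x y := hsep
  have he2 : (s(x, y) : Sym2 (Fin n)) = s(x, y) := rfl
  have he2' : (s(x, y) : Sym2 (Fin n)) = s(y, x) := Sym2.eq_swap.symm
  have hsep' : ¬ (Gd G s(x, y)).Reachable y x := fun h => hsep h.symm
  by_contra hcard
  push_neg at hcard
  obtain ⟨t1, t2, t3, h1, h2, h3, h12, h13, h23⟩ := Finset.two_lt_card_iff.mp hcard
  have hw : ∀ t ∈ L s(x, y), Wit L G s(x, y) x y t ∨ Wit L G s(x, y) y x t := fun t ht =>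
    necessary_wit hS hTC he2 hsep (hMin _ t ht)
  have key : ∀ a b : ℕ, a ≠ b → Wit L G s(x, y) x y a → Wit L G s(x, y) x y b → False :=
    fun a b hab wa wb => no_two' hS hTC he2 hsep hab wa wb
  have key' : ∀ a b : ℕ, a ≠ b → Wit L G s(x, y) y x a → Wit L G s(x, y) y x b → False :=
    fun a b hab wa wb => no_two' (x := y) (y := x) hS hTC he2' hsep' hab wa wb
  rcases hw t1 h1 with w1 | w1 <;> rcases hw t2 h2 with w2 | w2 <;>
    rcases hw t3 h3 with w3 | w3
  · exact key t1 t2 h12 w1 w2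
  · exact key t1 t2 h12 w1 w2
  · exact key t1 t3 h13 w1 w3
  · exact key' t2 t3 h23 w2 w3
  · exact key t2 t3 h23 w2 w3
  · exact key' t1 t3 h13 w1 w3
  · exact key' t1 t2 h12 w1 w2
  · exact key' t1 t2 h12 w1 w2

end Temporal
end

section
/- Every minimal proper labelling making a path graph on n ≥ 2 vertices temporally connected uses exactly 2n − 3 labels in total; in particular no such labelling uses 2n − 2 labels. -/
open Finset

namespace Temporal

variable {n : ℕ}

/-! ### Auxiliary machinery -/

/-- Increasing chain of labels on the cut interval `[u,v]`. -/
def IncOn (A : ℕ → Finset ℕ) (f : ℕ → ℕ) (u v : ℕ) : Prop :=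
  (∀ i, u ≤ i → i ≤ v → f i ∈ A i) ∧ (∀ i, u ≤ i → i + 1 ≤ v → f i < f (i + 1))

/-- Decreasing chain of labels on the cut interval `[u,v]`. -/
def DecOn (A : ℕ → Finset ℕ) (f : ℕ → ℕ) (u v : ℕ) : Prop :=
  (∀ i, u ≤ i → i ≤ v → f i ∈ A i) ∧ (∀ i, u ≤ i → i + 1 ≤ v → f (i + 1) < f i)

theorem IncOn.mono {A f} {u v u' v' : ℕ} (h : IncOn A f u v) (h1 : u ≤ u') (h2 : v' ≤ v) :
    IncOn A f u' v' :=
  ⟨fun i hi hi2 => h.1 i (by omega) (by omega), fun i hi hi2 => h.2 i (by omega) (by omega)⟩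

theorem DecOn.mono {A f} {u v u' v' : ℕ} (h : DecOn A f u v) (h1 : u ≤ u') (h2 : v' ≤ v) :
    DecOn A f u' v' :=
  ⟨fun i hi hi2 => h.1 i (by omega) (by omega), fun i hi hi2 => h.2 i (by omega) (by omega)⟩

theorem IncOn.lt {A f} {u v i j : ℕ} (h : IncOn A f u v) (h1 : u ≤ i) (h2 : i < j) (h3 : j ≤ v) :
    f i < f j := by
  induction j with
  | zero => omega
  | succ j ih =>
    rcases Nat.lt_or_ge i j with hj | hj
    · exact lt_trans (ih hj (by omega)) (h.2 j (by omega) (by omega))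
    · have : i = j := by omega
      subst this
      exact h.2 i (by omega) (by omega)

theorem DecOn.lt {A f} {u v i j : ℕ} (h : DecOn A f u v) (h1 : u ≤ i) (h2 : i < j) (h3 : j ≤ v) :
    f j < f i := by
  induction j with
  | zero => omega
  | succ j ih =>
    rcases Nat.lt_or_ge i j with hj | hj
    · exact lt_trans (h.2 j (by omega) (by omega)) (ih hj (by omega))
    · have : i = j := by omega
      subst this
      exact h.2 i (by omega) (by omega)

/-- Greedy pointwise-minimal increasing chain (greedy from the left). -/
theorem exists_min_inc (A : ℕ → Finset ℕ) (u : ℕ) :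
    ∀ k, (∃ g, IncOn A g u (u + k)) →
      ∃ a, IncOn A a u (u + k) ∧
        ∀ j, u ≤ j → j ≤ u + k → ∀ g, IncOn A g u j → a j ≤ g j := by
  intro k
  induction k with
  | zero =>
    rintro ⟨g, hg⟩
    have hne : (A u).Nonempty := ⟨g u, hg.1 u le_rfl (by omega)⟩
    refine ⟨fun _ => (A u).min' hne, ⟨?_, ?_⟩, ?_⟩
    · intro i h1 h2
      simp only [show i = u by omega]
      exact (A u).min'_mem hne
    · intro i h1 h2; omega
    · intro j h1 h2 g' hg'
      simp only [show j = u by omega]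
      exact Finset.min'_le _ _ (hg'.1 u (by omega) (by omega))
  | succ k ih =>
    rintro ⟨g, hg⟩
    obtain ⟨a, ha, hamin⟩ := ih ⟨g, hg.mono le_rfl (by omega)⟩
    have hgv : g (u + (k + 1)) ∈ A (u + (k + 1)) := hg.1 _ (by omega) le_rfl
    have hagk : a (u + k) ≤ g (u + k) :=
      hamin (u + k) (by omega) le_rfl g (hg.mono le_rfl (by omega))
    have hst : g (u + k) < g (u + (k + 1)) := hg.2 (u + k) (by omega) (by omega)
    have hSne : ((A (u + (k + 1))).filter (fun t => a (u + k) < t)).Nonempty :=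
      ⟨g (u + (k + 1)), Finset.mem_filter.2 ⟨hgv, by omega⟩⟩
    set x := ((A (u + (k + 1))).filter (fun t => a (u + k) < t)).min' hSne with hxdef
    have hxmem := Finset.min'_mem _ hSne
    rw [Finset.mem_filter] at hxmem
    refine ⟨fun i => if i = u + (k + 1) then x else a i, ⟨?_, ?_⟩, ?_⟩
    · intro i h1 h2
      by_cases hi : i = u + (k + 1)
      · simp only [if_pos hi]
        rw [hi]; exact hxmem.1
      · simp only [if_neg hi]
        exact ha.1 i h1 (by omega)
    · intro i h1 h2
      by_cases hi : i + 1 = u + (k + 1)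
      · simp only [if_neg (show ¬ (i = u + (k + 1)) by omega), if_pos hi]
        rw [show i = u + k by omega]
        exact hxmem.2
      · have hi' : ¬ (i = u + (k + 1)) := by omega
        simp only [if_neg hi, if_neg hi']
        exact ha.2 i h1 (by omega)
    · intro j h1 h2 g' hg'
      by_cases hj : j = u + (k + 1)
      · subst hj
        simp only [if_pos rfl]
        have h3 : a (u + k) ≤ g' (u + k) :=
          hamin (u + k) (by omega) le_rfl g' (hg'.mono le_rfl (by omega))
        have h4 : g' (u + k) < g' (u + (k + 1)) := hg'.2 (u + k) (by omega) (by omega)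
        exact Finset.min'_le _ _ (Finset.mem_filter.2 ⟨hg'.1 _ (by omega) le_rfl, by omega⟩)
      · simp only [if_neg hj]
        exact hamin j h1 (by omega) g' hg'

/-- Greedy pointwise-maximal increasing chain (greedy from the right). -/
theorem exists_max_inc (A : ℕ → Finset ℕ) (v : ℕ) :
    ∀ k u, u + k = v → (∃ g, IncOn A g u v) →
      ∃ b, IncOn A b u v ∧
        ∀ j, u ≤ j → j ≤ v → ∀ g, IncOn A g j v → g j ≤ b j := by
  intro k
  induction k with
  | zero =>
    rintro u huv ⟨g, hg⟩
    subst huv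
    have hne : (A u).Nonempty := ⟨g u, hg.1 u le_rfl (by omega)⟩
    refine ⟨fun _ => (A u).max' hne, ⟨?_, ?_⟩, ?_⟩
    · intro i h1 h2
      simp only [show i = u by omega]
      exact (A u).max'_mem hne
    · intro i h1 h2; omega
    · intro j h1 h2 g' hg'
      simp only [show j = u by omega]
      exact Finset.le_max' _ _ (hg'.1 u (by omega) (by omega))
  | succ k ih =>
    rintro u huv ⟨g, hg⟩
    obtain ⟨b, hb, hbmax⟩ := ih (u + 1) (by omega) ⟨g, hg.mono (by omega) le_rfl⟩
    have hgu : g u ∈ A u := hg.1 u le_rfl (by omega)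
    have hgb : g (u + 1) ≤ b (u + 1) :=
      hbmax (u + 1) le_rfl (by omega) g (hg.mono (by omega) le_rfl)
    have hgu1 : g u < g (u + 1) := hg.2 u le_rfl (by omega)
    have hSne : ((A u).filter (fun t => t < b (u + 1))).Nonempty :=
      ⟨g u, Finset.mem_filter.2 ⟨hgu, by omega⟩⟩
    set x := ((A u).filter (fun t => t < b (u + 1))).max' hSne with hxdef
    have hxmem := Finset.max'_mem _ hSne
    rw [Finset.mem_filter] at hxmem
    refine ⟨fun i => if i = u then x else b i, ⟨?_, ?_⟩, ?_⟩
    · intro i h1 h2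
      by_cases hi : i = u
      · simp only [if_pos hi]
        rw [hi]; exact hxmem.1
      · simp only [if_neg hi]
        exact hb.1 i (by omega) h2
    · intro i h1 h2
      by_cases hi : i = u
      · simp only [if_pos hi, if_neg (show ¬ (i + 1 = u) by omega)]
        rw [hi]; exact hxmem.2
      · simp only [if_neg hi, if_neg (show ¬ (i + 1 = u) by omega)]
        exact hb.2 i (by omega) h2
    · intro j h1 h2 g' hg'
      by_cases hj : j = u
      · simp only [if_pos hj]
        have h3 : g' (u + 1) ≤ b (u + 1) :=
          hbmax (u + 1) le_rfl (by omega) g' (hg'.mono (by omega) le_rfl)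
        have h4 : g' u < g' (u + 1) := hg'.2 u (by omega) (by omega)
        have h5 : g' j = g' u := by rw [hj]
        rw [h5]
        exact Finset.le_max' _ _ (Finset.mem_filter.2 ⟨hg'.1 u (by omega) (by omega), by omega⟩)
      · simp only [if_neg hj]
        exact hbmax j (by omega) h2 g' hg'

/-- Greedy pointwise-minimal decreasing chain (greedy from the right). -/
theorem exists_min_dec (A : ℕ → Finset ℕ) (v : ℕ) :
    ∀ k u, u + k = v → (∃ g, DecOn A g u v) →
      ∃ a, DecOn A a u v ∧
        ∀ j, u ≤ j → j ≤ v → ∀ g, DecOn A g j v → a j ≤ g j := by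
  intro k
  induction k with
  | zero =>
    rintro u huv ⟨g, hg⟩
    subst huv
    have hne : (A u).Nonempty := ⟨g u, hg.1 u le_rfl (by omega)⟩
    refine ⟨fun _ => (A u).min' hne, ⟨?_, ?_⟩, ?_⟩
    · intro i h1 h2
      simp only [show i = u by omega]
      exact (A u).min'_mem hne
    · intro i h1 h2; omega
    · intro j h1 h2 g' hg'
      simp only [show j = u by omega]
      exact Finset.min'_le _ _ (hg'.1 u (by omega) (by omega))
  | succ k ih =>
    rintro u huv ⟨g, hg⟩
    obtain ⟨a, ha, hamin⟩ := ih (u + 1) (by omega) ⟨g, hg.mono (by omega) le_rfl⟩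
    have hgu : g u ∈ A u := hg.1 u le_rfl (by omega)
    have hga : a (u + 1) ≤ g (u + 1) :=
      hamin (u + 1) le_rfl (by omega) g (hg.mono (by omega) le_rfl)
    have hgu1 : g (u + 1) < g u := hg.2 u le_rfl (by omega)
    have hSne : ((A u).filter (fun t => a (u + 1) < t)).Nonempty :=
      ⟨g u, Finset.mem_filter.2 ⟨hgu, by omega⟩⟩
    set x := ((A u).filter (fun t => a (u + 1) < t)).min' hSne with hxdef
    have hxmem := Finset.min'_mem _ hSne
    rw [Finset.mem_filter] at hxmem
    refine ⟨fun i => if i = u then x else a i, ⟨?_, ?_⟩, ?_⟩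
    · intro i h1 h2
      by_cases hi : i = u
      · simp only [if_pos hi]
        rw [hi]; exact hxmem.1
      · simp only [if_neg hi]
        exact ha.1 i (by omega) h2
    · intro i h1 h2
      by_cases hi : i = u
      · simp only [if_neg (show ¬ (i + 1 = u) by omega), if_pos hi]
        rw [hi]; exact hxmem.2
      · simp only [if_neg hi, if_neg (show ¬ (i + 1 = u) by omega)]
        exact ha.2 i (by omega) h2
    · intro j h1 h2 g' hg'
      by_cases hj : j = u
      · simp only [if_pos hj]
        have h3 : a (u + 1) ≤ g' (u + 1) :=
          hamin (u + 1) le_rfl (by omega) g' (hg'.mono (by omega) le_rfl)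
        have h4 : g' (u + 1) < g' u := hg'.2 u (by omega) (by omega)
        have h5 : g' j = g' u := by rw [hj]
        rw [h5]
        exact Finset.min'_le _ _ (Finset.mem_filter.2 ⟨hg'.1 u (by omega) (by omega), by omega⟩)
      · simp only [if_neg hj]
        exact hamin j (by omega) h2 g' hg'

/-- Greedy pointwise-maximal decreasing chain (greedy from the left). -/
theorem exists_max_dec (A : ℕ → Finset ℕ) (u : ℕ) :
    ∀ k, (∃ g, DecOn A g u (u + k)) →
      ∃ b, DecOn A b u (u + k) ∧
        ∀ j, u ≤ j → j ≤ u + k → ∀ g, DecOn A g u j → g j ≤ b j := by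
  intro k
  induction k with
  | zero =>
    rintro ⟨g, hg⟩
    have hne : (A u).Nonempty := ⟨g u, hg.1 u le_rfl (by omega)⟩
    refine ⟨fun _ => (A u).max' hne, ⟨?_, ?_⟩, ?_⟩
    · intro i h1 h2
      simp only [show i = u by omega]
      exact (A u).max'_mem hne
    · intro i h1 h2; omega
    · intro j h1 h2 g' hg'
      simp only [show j = u by omega]
      exact Finset.le_max' _ _ (hg'.1 u (by omega) (by omega))
  | succ k ih =>
    rintro ⟨g, hg⟩
    obtain ⟨b, hb, hbmax⟩ := ih ⟨g, hg.mono le_rfl (by omega)⟩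
    have hgv : g (u + (k + 1)) ∈ A (u + (k + 1)) := hg.1 _ (by omega) le_rfl
    have hbgk : g (u + k) ≤ b (u + k) :=
      hbmax (u + k) (by omega) le_rfl g (hg.mono le_rfl (by omega))
    have hst : g (u + (k + 1)) < g (u + k) := hg.2 (u + k) (by omega) (by omega)
    have hSne : ((A (u + (k + 1))).filter (fun t => t < b (u + k))).Nonempty :=
      ⟨g (u + (k + 1)), Finset.mem_filter.2 ⟨hgv, by omega⟩⟩
    set x := ((A (u + (k + 1))).filter (fun t => t < b (u + k))).max' hSne with hxdef
    have hxmem := Finset.max'_mem _ hSne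
    rw [Finset.mem_filter] at hxmem
    refine ⟨fun i => if i = u + (k + 1) then x else b i, ⟨?_, ?_⟩, ?_⟩
    · intro i h1 h2
      by_cases hi : i = u + (k + 1)
      · simp only [if_pos hi]
        rw [hi]; exact hxmem.1
      · simp only [if_neg hi]
        exact hb.1 i h1 (by omega)
    · intro i h1 h2
      by_cases hi : i + 1 = u + (k + 1)
      · simp only [if_neg (show ¬ (i = u + (k + 1)) by omega), if_pos hi]
        rw [show i = u + k by omega]
        exact hxmem.2
      · have hi' : ¬ (i = u + (k + 1)) := by omega
        simp only [if_neg hi, if_neg hi']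
        exact hb.2 i h1 (by omega)
    · intro j h1 h2 g' hg'
      by_cases hj : j = u + (k + 1)
      · subst hj
        simp only [if_pos rfl]
        have h3 : g' (u + k) ≤ b (u + k) :=
          hbmax (u + k) (by omega) le_rfl g' (hg'.mono le_rfl (by omega))
        have h4 : g' (u + (k + 1)) < g' (u + k) := hg'.2 (u + k) (by omega) (by omega)
        exact Finset.le_max' _ _ (Finset.mem_filter.2 ⟨hg'.1 _ (by omega) le_rfl, by omega⟩)
      · simp only [if_neg hj]
        exact hbmax j h1 (by omega) g' hg'


/-- The `i`-th vertex of the path, as an element of `Fin n` (truncated). -/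
def vtx (hn : 0 < n) (i : ℕ) : Fin n := ⟨min i (n - 1), by omega⟩

theorem vtx_val (hn : 0 < n) {i : ℕ} (h : i ≤ n - 1) : (vtx hn i : ℕ) = i := by
  simp only [vtx]; omega

theorem vtx_eq (hn : 0 < n) (u : Fin n) : vtx hn u.val = u := by
  apply Fin.ext
  rw [vtx_val hn (by omega)]

/-- The `i`-th edge of the path. -/
def eE (hn : 0 < n) (i : ℕ) : Sym2 (Fin n) := s(vtx hn i, vtx hn (i + 1))

/-- The label set of the `i`-th edge. -/
def AA (hn : 0 < n) (L : TLabel n) (i : ℕ) : Finset ℕ := L (eE hn i)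

theorem eE_eq (hn : 0 < n) {a b : Fin n} (h : (a : ℕ) + 1 = (b : ℕ)) :
    eE hn a.val = s(a, b) := by
  have h1 : vtx hn a.val = a := vtx_eq hn a
  have h2 : vtx hn (a.val + 1) = b := by
    apply Fin.ext
    rw [vtx_val hn (by omega)]
    omega
  rw [eE, h1, h2]

theorem AA_eq (hn : 0 < n) (L : TLabel n) {a b : Fin n} (h : (a : ℕ) + 1 = (b : ℕ)) :
    AA hn L a.val = L s(a, b) := by rw [AA, eE_eq hn h]

theorem eE_inj (hn : 0 < n) (hn2 : 2 ≤ n) {i j : ℕ} (hi : i ≤ n - 2) (hj : j ≤ n - 2)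
    (h : eE hn i = eE hn j) : i = j := by
  rw [eE, eE, Sym2.eq_iff] at h
  have e1 : (vtx hn i : ℕ) = i := vtx_val hn (by omega)
  have e2 : (vtx hn (i + 1) : ℕ) = i + 1 := vtx_val hn (by omega)
  have e3 : (vtx hn j : ℕ) = j := vtx_val hn (by omega)
  have e4 : (vtx hn (j + 1) : ℕ) = j + 1 := vtx_val hn (by omega)
  rcases h with ⟨h1, h2⟩ | ⟨h1, h2⟩
  · have := congrArg Fin.val h1; omega
  · have := congrArg Fin.val h1
    have := congrArg Fin.val h2
    omega

theorem adj_of_mem {L : TLabel n} (hS : SupportedOn L (SimpleGraph.pathGraph n))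
    {a b : Fin n} {t : ℕ} (h : t ∈ L s(a, b)) :
    (a : ℕ) + 1 = (b : ℕ) ∨ (b : ℕ) + 1 = (a : ℕ) := by
  have h1 : L s(a, b) ≠ ∅ := Finset.ne_empty_of_mem h
  have h2 := hS _ h1
  rw [SimpleGraph.mem_edgeSet, SimpleGraph.pathGraph_adj] at h2
  exact h2

/-- A journey induces a chain of crossing times over the cuts separating endpoints. -/
theorem jto_chain (hn : 0 < n) {L : TLabel n} (hS : SupportedOn L (SimpleGraph.pathGraph n))
    (u : Fin n) : ∀ (v : Fin n) (t : ℕ), JTo L u v t →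
      ((u : ℕ) < (v : ℕ) → ∃ f, IncOn (AA hn L) f u.val (v.val - 1) ∧ f (v.val - 1) ≤ t) ∧
      ((v : ℕ) < (u : ℕ) → ∃ f, DecOn (AA hn L) f v.val (u.val - 1) ∧ f v.val ≤ t) := by
  intro v t h
  induction h with
  | single w t ht =>
    rcases adj_of_mem hS ht with hadj | hadj
    · constructor
      · intro _
        refine ⟨fun _ => t, ⟨?_, ?_⟩, le_rfl⟩
        · intro i h1 h2
          have : i = u.val := by omega
          rw [this, AA_eq hn L hadj]
          exact ht
        · intro i h1 h2; omega
      · intro hlt; omega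
    · constructor
      · intro hlt; omega
      · intro _
        refine ⟨fun _ => t, ⟨?_, ?_⟩, le_rfl⟩
        · intro i h1 h2
          have : i = w.val := by omega
          rw [this, AA_eq hn L hadj, Sym2.eq_swap]
          exact ht
        · intro i h1 h2; omega
  | step v w t t' h1 ht hlt ih =>
    rcases adj_of_mem hS ht with hadj | hadj
    · -- w = v + 1
      constructor
      · intro hac
        rcases Nat.lt_trichotomy u.val v.val with hab | hab | hab
        · obtain ⟨f, hf, hft⟩ := ih.1 hab
          refine ⟨fun i => if i = (v : ℕ) then t' else f i, ⟨?_, ?_⟩, ?_⟩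
          · intro i hi1 hi2
            by_cases hiv : i = (v : ℕ)
            · simp only [if_pos hiv]
              rw [hiv, AA_eq hn L hadj]
              exact ht
            · simp only [if_neg hiv]
              exact hf.1 i hi1 (by omega)
          · intro i hi1 hi2
            by_cases hiv : i + 1 = (v : ℕ)
            · simp only [if_neg (show ¬ i = (v : ℕ) by omega), if_pos hiv]
              have : i = (v : ℕ) - 1 := by omega
              rw [this]
              -- f (v-1) ≤ t < t'
              omega
            · simp only [if_neg (show ¬ i = (v : ℕ) by omega), if_neg hiv]
              exact hf.2 i hi1 (by omega)
          · simp [show (w : ℕ) - 1 = (v : ℕ) by omega]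
        · -- u = v
          have huv : u = v := Fin.ext hab
          refine ⟨fun _ => t', ⟨?_, ?_⟩, ?_⟩
          · intro i hi1 hi2
            have : i = u.val := by omega
            rw [this, huv, AA_eq hn L hadj]
            exact ht
          · intro i hi1 hi2; omega
          · exact le_rfl
        · omega
      · intro hca
        have hba : (v : ℕ) < (u : ℕ) := by omega
        obtain ⟨f, hf, hfb⟩ := ih.2 hba
        refine ⟨f, hf.mono (by omega) le_rfl, ?_⟩
        have := hf.2 (v : ℕ) le_rfl (by omega)
        rw [show (w : ℕ) = (v : ℕ) + 1 by omega]
        omega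
    · -- v = w + 1
      constructor
      · intro hac
        have hab : (u : ℕ) < (v : ℕ) := by omega
        obtain ⟨f, hf, hft⟩ := ih.1 hab
        refine ⟨f, hf.mono le_rfl (by omega), ?_⟩
        have h2 : f ((w : ℕ) - 1) < f ((w : ℕ) - 1 + 1) := hf.2 ((w : ℕ) - 1) (by omega) (by omega)
        have h3 : (w : ℕ) - 1 + 1 = (v : ℕ) - 1 := by omega
        rw [h3] at h2
        omega
      · intro hca
        rcases Nat.lt_trichotomy (v : ℕ) (u : ℕ) with hba | hba | hba
        · obtain ⟨f, hf, hfb⟩ := ih.2 hba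
          refine ⟨fun i => if i = (w : ℕ) then t' else f i, ⟨?_, ?_⟩, ?_⟩
          · intro i hi1 hi2
            by_cases hiw : i = (w : ℕ)
            · simp only [if_pos hiw]
              rw [hiw, AA_eq hn L hadj, Sym2.eq_swap]
              exact ht
            · simp only [if_neg hiw]
              exact hf.1 i (by omega) hi2
          · intro i hi1 hi2
            by_cases hiw : i = (w : ℕ)
            · simp only [if_pos hiw, if_neg (show ¬ i + 1 = (w : ℕ) by omega)]
              have : i + 1 = (v : ℕ) := by omega
              rw [this]
              omega
            · simp only [if_neg hiw, if_neg (show ¬ i + 1 = (w : ℕ) by omega)]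
              exact hf.2 i (by omega) hi2
          · simp
        · -- u = v
          have huv : u = v := Fin.ext hba.symm
          refine ⟨fun _ => t', ⟨?_, ?_⟩, ?_⟩
          · intro i hi1 hi2
            have : i = w.val := by omega
            rw [this, AA_eq hn L hadj, Sym2.eq_swap, ← huv]
            exact (huv ▸ ht)
          · intro i hi1 hi2; omega
          · exact le_rfl
        · omega

/-- An increasing chain yields a rightward journey. -/
theorem chain_jto (hn : 0 < n) (L : TLabel n) :
    ∀ (k u : ℕ), u + k ≤ n - 2 → ∀ f, IncOn (AA hn L) f u (u + k) →
      JTo L (vtx hn u) (vtx hn (u + k + 1)) (f (u + k)) := by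
  intro k
  induction k with
  | zero =>
    intro u hu f hf
    exact JTo.single _ _ (hf.1 u le_rfl le_rfl)
  | succ k ih =>
    intro u hu f hf
    have h1 := ih u (by omega) f (hf.mono le_rfl (by omega))
    exact JTo.step _ _ _ _ h1 (hf.1 (u + k + 1) (by omega) (by omega))
      (hf.2 (u + k) (by omega) (by omega))

/-- A decreasing chain yields a leftward journey. -/
theorem chain_jto_dec (hn : 0 < n) (L : TLabel n) :
    ∀ (k u : ℕ), u + k ≤ n - 2 → ∀ f, DecOn (AA hn L) f u (u + k) →
      JTo L (vtx hn (u + k + 1)) (vtx hn u) (f u) := by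
  intro k
  induction k with
  | zero =>
    intro u hu f hf
    refine JTo.single _ _ ?_
    rw [Sym2.eq_swap]
    exact hf.1 u le_rfl le_rfl
  | succ k ih =>
    intro u hu f hf
    have h1 := ih (u + 1) (by omega) f (hf.mono (by omega) (by omega))
    rw [show u + 1 + k + 1 = u + (k + 1) + 1 by omega] at h1
    refine JTo.step _ _ _ _ h1 ?_ (hf.2 u le_rfl (by omega))
    rw [Sym2.eq_swap]
    exact hf.1 u le_rfl (by omega)


theorem forced (hn : 0 < n) (hn2 : 2 ≤ n) {L : TLabel n}
    (hS : SupportedOn L (SimpleGraph.pathGraph n)) (hMin : Minimal L) {i t : ℕ}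
    (hi : i ≤ n - 2) (ht : t ∈ AA hn L i) :
    (∃ u v, u ≤ i ∧ i ≤ v ∧ v ≤ n - 2 ∧ (∃ g, IncOn (AA hn L) g u v) ∧
        ∀ g, IncOn (AA hn L) g u v → g i = t) ∨
    (∃ u v, u ≤ i ∧ i ≤ v ∧ v ≤ n - 2 ∧ (∃ g, DecOn (AA hn L) g u v) ∧
        ∀ g, DecOn (AA hn L) g u v → g i = t) := by
  obtain ⟨p, q, hr, hnr⟩ := hMin (eE hn i) t ht
  set L' := erase L (eE hn i) t with hL'
  have hAAeq : ∀ j, AA hn L' j =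
      if eE hn j = eE hn i then (L (eE hn j)).erase t else L (eE hn j) := fun j => rfl
  have hAA' : ∀ j, j ≤ n - 2 → j ≠ i → AA hn L' j = AA hn L j := by
    intro j h1 h2
    rw [hAAeq j, if_neg (fun h => h2 (eE_inj hn hn2 h1 hi h))]
    rfl
  have hAA'i : AA hn L' i = (AA hn L i).erase t := by
    rw [hAAeq i, if_pos rfl]
    rfl
  have hreach : ∀ u v : ℕ, u ≤ v → v ≤ n - 2 → (∃ g, IncOn (AA hn L') g u v) →
      Reach L' (vtx hn u) (vtx hn (v + 1)) := by
    rintro u v h1 h2 ⟨g, hg⟩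
    have hc := chain_jto hn L' (v - u) u (by omega) g
      (by rw [show u + (v - u) = v by omega]; exact hg)
    rw [show u + (v - u) = v by omega] at hc
    exact Or.inr ⟨_, hc⟩
  have hreachd : ∀ u v : ℕ, u ≤ v → v ≤ n - 2 → (∃ g, DecOn (AA hn L') g u v) →
      Reach L' (vtx hn (v + 1)) (vtx hn u) := by
    rintro u v h1 h2 ⟨g, hg⟩
    have hc := chain_jto_dec hn L' (v - u) u (by omega) g
      (by rw [show u + (v - u) = v by omega]; exact hg)
    rw [show u + (v - u) = v by omega] at hc
    exact Or.inr ⟨_, hc⟩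
  have hpq : p ≠ q := by rintro rfl; exact hnr (Or.inl rfl)
  rcases Nat.lt_trichotomy (p : ℕ) (q : ℕ) with hlt | heq | hlt
  · -- p < q : forward
    left
    rcases hr with h | ⟨t0, hj⟩
    · exact absurd h hpq
    obtain ⟨f, hf, -⟩ := (jto_chain hn hS p q t0 hj).1 hlt
    have hq := q.isLt
    set u := (p : ℕ) with hu
    set v := (q : ℕ) - 1 with hv
    have huv : u ≤ v := by omega
    have hv2 : v ≤ n - 2 := by omega
    have hnot : ∀ g, IncOn (AA hn L') g u v → False := by
      intro g hg
      apply hnr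
      have hr' := hreach u v huv hv2 ⟨g, hg⟩
      rw [show v + 1 = (q : ℕ) by omega] at hr'
      rwa [vtx_eq hn p, vtx_eq hn q] at hr'
    have hii : u ≤ i ∧ i ≤ v := by
      by_contra hcon
      apply hnot f
      refine ⟨fun j h1 h2 => ?_, hf.2⟩
      rw [hAA' j (by omega) (by omega)]
      exact hf.1 j h1 h2
    refine ⟨u, v, hii.1, hii.2, hv2, ⟨f, hf⟩, ?_⟩
    intro g hg
    by_contra hne
    apply hnot g
    refine ⟨fun j h1 h2 => ?_, hg.2⟩
    by_cases hji : j = i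
    · rw [hji, hAA'i]
      exact Finset.mem_erase.2 ⟨hne, hg.1 i hii.1 hii.2⟩
    · rw [hAA' j (by omega) hji]
      exact hg.1 j h1 h2
  · exact absurd (Fin.ext heq) hpq
  · -- q < p : backward
    right
    rcases hr with h | ⟨t0, hj⟩
    · exact absurd h hpq
    obtain ⟨f, hf, -⟩ := (jto_chain hn hS p q t0 hj).2 hlt
    have hq := p.isLt
    set u := (q : ℕ) with hu
    set v := (p : ℕ) - 1 with hv
    have huv : u ≤ v := by omega
    have hv2 : v ≤ n - 2 := by omega
    have hnot : ∀ g, DecOn (AA hn L') g u v → False := by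
      intro g hg
      apply hnr
      have hr' := hreachd u v huv hv2 ⟨g, hg⟩
      rw [show v + 1 = (p : ℕ) by omega] at hr'
      rwa [vtx_eq hn p, vtx_eq hn q] at hr'
    have hii : u ≤ i ∧ i ≤ v := by
      by_contra hcon
      apply hnot f
      refine ⟨fun j h1 h2 => ?_, hf.2⟩
      rw [hAA' j (by omega) (by omega)]
      exact hf.1 j h1 h2
    refine ⟨u, v, hii.1, hii.2, hv2, ⟨f, hf⟩, ?_⟩
    intro g hg
    by_contra hne
    apply hnot g
    refine ⟨fun j h1 h2 => ?_, hg.2⟩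
    by_cases hji : j = i
    · rw [hji, hAA'i]
      exact Finset.mem_erase.2 ⟨hne, hg.1 i hii.1 hii.2⟩
    · rw [hAA' j (by omega) hji]
      exact hg.1 j h1 h2


/-- Every minimal proper labelling making the path graph on `n ≥ 2` vertices temporally
connected uses exactly `2n - 3` labels in total. -/
theorem stmt6 {n : ℕ} (hn : 2 ≤ n) (L : TLabel n)
    (hS : SupportedOn L (SimpleGraph.pathGraph n)) (hP : Proper L) (hTC : TC L)
    (hMin : Minimal L) : cost L = 2 * n - 3 := by
  have hn0 : 0 < n := by omega
  -- cost as a sum over path edges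
  have hcost : cost L = ∑ i ∈ Finset.range (n - 1), (AA hn0 L i).card := by
    have h1 : ∑ e ∈ ((Finset.range (n - 1)).image (eE hn0)), (L e).card
        = ∑ e : Sym2 (Fin n), (L e).card := by
      apply Finset.sum_subset (Finset.subset_univ _)
      intro e he hne
      induction e using Sym2.ind with
      | _ a b =>
        by_contra h0
        apply hne
        have hnee : L s(a, b) ≠ ∅ := fun h => h0 (by rw [h]; rfl)
        have hadj := hS _ hnee
        rw [SimpleGraph.mem_edgeSet, SimpleGraph.pathGraph_adj] at hadj
        rw [Finset.mem_image]
        rcases hadj with h | h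
        · exact ⟨a.val, Finset.mem_range.2 (by have := b.isLt; omega), by rw [eE_eq hn0 h]⟩
        · exact ⟨b.val, Finset.mem_range.2 (by have := a.isLt; omega),
            by rw [eE_eq hn0 h, Sym2.eq_swap]⟩
    have h2 : ∑ e ∈ ((Finset.range (n - 1)).image (eE hn0)), (L e).card
        = ∑ i ∈ Finset.range (n - 1), (AA hn0 L i).card := by
      apply Finset.sum_image
      intro a ha b hb h
      rw [Finset.mem_coe, Finset.mem_range] at ha hb
      exact eE_inj hn0 hn (by omega) (by omega) h
    unfold cost
    rw [← h1, h2]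
  -- global chains from temporal connectivity
  have hv0 : (vtx hn0 0 : ℕ) = 0 := vtx_val hn0 (by omega)
  have hvl : (vtx hn0 (n - 1) : ℕ) = n - 1 := vtx_val hn0 le_rfl
  have hcg : ∃ g, IncOn (AA hn0 L) g 0 (n - 2) := by
    rcases hTC (vtx hn0 0) (vtx hn0 (n - 1)) with h | ⟨t0, hj⟩
    · exfalso
      have := congrArg Fin.val h
      omega
    · obtain ⟨f, hf, -⟩ := (jto_chain hn0 hS _ _ t0 hj).1 (by omega)
      rw [hv0, hvl] at hf
      rw [show n - 1 - 1 = n - 2 by omega] at hf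
      exact ⟨f, hf⟩
  have hdg : ∃ g, DecOn (AA hn0 L) g 0 (n - 2) := by
    rcases hTC (vtx hn0 (n - 1)) (vtx hn0 0) with h | ⟨t0, hj⟩
    · exfalso
      have := congrArg Fin.val h
      omega
    · obtain ⟨f, hf, -⟩ := (jto_chain hn0 hS _ _ t0 hj).2 (by omega)
      rw [hv0, hvl] at hf
      rw [show n - 1 - 1 = n - 2 by omega] at hf
      exact ⟨f, hf⟩
  -- the four extremal greedy chains
  obtain ⟨c, hc, hcmin⟩ := exists_min_inc (AA hn0 L) 0 (n - 2)
    (by rw [Nat.zero_add]; exact hcg)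
  rw [Nat.zero_add] at hc hcmin
  obtain ⟨B, hB, hBmax⟩ := exists_max_inc (AA hn0 L) (n - 2) (n - 2) 0 (by omega) hcg
  obtain ⟨d, hd, hdmin⟩ := exists_min_dec (AA hn0 L) (n - 2) (n - 2) 0 (by omega) hdg
  obtain ⟨D, hD, hDmax⟩ := exists_max_dec (AA hn0 L) 0 (n - 2)
    (by rw [Nat.zero_add]; exact hdg)
  rw [Nat.zero_add] at hD hDmax
  -- forcing consequences
  have hFF : ∀ i t, i ≤ n - 2 →
      (∃ u v, u ≤ i ∧ i ≤ v ∧ v ≤ n - 2 ∧ (∃ g, IncOn (AA hn0 L) g u v) ∧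
        ∀ g, IncOn (AA hn0 L) g u v → g i = t) → t = c i ∧ c i = B i := by
    rintro i t hi ⟨u, v, h1, h2, h3, hex, hforce⟩
    obtain ⟨α, hα, hαmin⟩ := exists_min_inc (AA hn0 L) u (v - u)
      (by rw [show u + (v - u) = v by omega]; exact hex)
    rw [show u + (v - u) = v by omega] at hα hαmin
    obtain ⟨β, hβ, hβmax⟩ := exists_max_inc (AA hn0 L) v (v - u) u (by omega) hex
    have e1 : α i = t := hforce α hα
    have e2 : β i = t := hforce β hβ
    have e3 : α i ≤ c i := hαmin i h1 h2 c (hc.mono (by omega) (by omega))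
    have e4 : B i ≤ β i := hβmax i h1 h2 B (hB.mono (by omega) (by omega))
    have e5 : c i ≤ B i := hBmax i (by omega) (by omega) c (hc.mono (by omega) (by omega))
    exact ⟨by omega, by omega⟩
  have hGG : ∀ i t, i ≤ n - 2 →
      (∃ u v, u ≤ i ∧ i ≤ v ∧ v ≤ n - 2 ∧ (∃ g, DecOn (AA hn0 L) g u v) ∧
        ∀ g, DecOn (AA hn0 L) g u v → g i = t) → t = d i ∧ d i = D i := by
    rintro i t hi ⟨u, v, h1, h2, h3, hex, hforce⟩
    obtain ⟨δ, hδ, hδmin⟩ := exists_min_dec (AA hn0 L) v (v - u) u (by omega) hex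
    obtain ⟨M, hM, hMmax⟩ := exists_max_dec (AA hn0 L) u (v - u)
      (by rw [show u + (v - u) = v by omega]; exact hex)
    rw [show u + (v - u) = v by omega] at hM hMmax
    have e1 : δ i = t := hforce δ hδ
    have e2 : M i = t := hforce M hM
    have e3 : δ i ≤ d i := hδmin i h1 h2 d (hd.mono (by omega) (by omega))
    have e4 : D i ≤ M i := hMmax i h1 h2 D (hD.mono (by omega) (by omega))
    have e5 : d i ≤ D i := hDmax i (by omega) (by omega) d (hd.mono (by omega) (by omega))
    exact ⟨by omega, by omega⟩
  have hsub : ∀ i, i ≤ n - 2 → ∀ t ∈ AA hn0 L i, t = c i ∨ t = d i := by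
    intro i hi t ht
    rcases forced hn0 hn hS hMin hi ht with hF | hG
    · exact Or.inl (hFF i t hi hF).1
    · exact Or.inr (hGG i t hi hG).1
  -- existence of a shared cut
  have hshared : ∃ i0, i0 ≤ n - 2 ∧ c i0 = d i0 := by
    by_contra hcon
    push_neg at hcon
    have hcB : ∀ i, i ≤ n - 2 → c i = B i := by
      intro i hi
      rcases forced hn0 hn hS hMin hi (hc.1 i (by omega) hi) with hF | hG
      · exact (hFF i (c i) hi hF).2
      · exact absurd (hGG i (c i) hi hG).1 (hcon i hi)
    have hdD : ∀ i, i ≤ n - 2 → d i = D i := by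
      intro i hi
      rcases forced hn0 hn hS hMin hi (hd.1 i (by omega) hi) with hF | hG
      · exact absurd (hFF i (d i) hi hF).1.symm (hcon i hi)
      · exact (hGG i (d i) hi hG).2
    have hc0 : c 0 ≤ d 0 := by
      refine hcmin 0 le_rfl (by omega) d ⟨?_, ?_⟩
      · intro j h1 h2
        rw [show j = 0 by omega]
        exact hd.1 0 le_rfl (by omega)
      · intro j h1 h2; omega
    have hm0 : d (n - 2) ≤ c (n - 2) := by
      refine hdmin (n - 2) (by omega) le_rfl c ⟨?_, ?_⟩
      · intro j h1 h2
        rw [show j = n - 2 by omega]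
        exact hc.1 (n - 2) (by omega) le_rfl
      · intro j h1 h2; omega
    have hall : ∀ k, k ≤ n - 2 → c k < d k := by
      intro k
      induction k with
      | zero => intro _; exact lt_of_le_of_ne hc0 (hcon 0 (by omega))
      | succ k ih =>
        intro hk
        have h1 := ih (by omega)
        by_contra h2
        have h3 : d (k + 1) < c (k + 1) :=
          lt_of_le_of_ne (by omega) (fun h => hcon (k + 1) hk h.symm)
        -- adjacent edges share no label
        have hdisj : Disjoint (AA hn0 L k) (AA hn0 L (k + 1)) := by
          refine hP _ _ (fun h => ?_) ⟨vtx hn0 (k + 1), ?_, ?_⟩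
          · have := eE_inj hn0 hn (by omega) hk h
            omega
          · exact Sym2.mem_mk_right _ _
          · exact Sym2.mem_mk_left _ _
        have hne2 : d k ≠ c (k + 1) := by
          intro h
          exact (Finset.disjoint_left.1 hdisj (hd.1 k (by omega) (by omega)))
            (h ▸ hc.1 (k + 1) (by omega) hk)
        have hgt : c (k + 1) < d k := by
          rcases Nat.lt_or_ge (c (k + 1)) (d k) with h | h
          · exact h
          · exfalso
            have hdlt : d k < c (k + 1) := by omega
            have hgk : IncOn (AA hn0 L) (fun j => if j = k then d k else c j) k (n - 2) := by
              refine ⟨fun j h1' h2' => ?_, fun j h1' h2' => ?_⟩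
              · by_cases hj : j = k
                · simp only [if_pos hj]
                  rw [hj]
                  exact hd.1 k (by omega) (by omega)
                · simp only [if_neg hj]
                  exact hc.1 j (by omega) h2'
              · by_cases hj : j = k
                · simp only [if_pos hj, if_neg (show ¬ j + 1 = k by omega)]
                  rw [hj]
                  exact hdlt
                · simp only [if_neg hj, if_neg (show ¬ j + 1 = k by omega)]
                  exact hc.2 j (by omega) h2'
            have hle := hBmax k (by omega) (by omega) _ hgk
            simp only [ite_true, if_pos rfl] at hle
            rw [← hcB k (by omega)] at hle
            omega
        have hdk : d k ≤ D k := hDmax k (by omega) (by omega) d (hd.mono le_rfl (by omega))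
        have hgk2 : DecOn (AA hn0 L) (fun j => if j = k + 1 then c (k + 1) else D j)
            0 (k + 1) := by
          refine ⟨fun j h1' h2' => ?_, fun j h1' h2' => ?_⟩
          · by_cases hj : j = k + 1
            · simp only [if_pos hj]
              rw [hj]
              exact hc.1 (k + 1) (by omega) hk
            · simp only [if_neg hj]
              exact hD.1 j (by omega) (by omega)
          · by_cases hj : j + 1 = k + 1
            · simp only [if_pos hj, if_neg (show ¬ j = k + 1 by omega)]
              rw [show j = k by omega]
              omega
            · simp only [if_neg hj, if_neg (show ¬ j = k + 1 by omega)]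
              exact hD.2 j (by omega) (by omega)
        have hfin := hDmax (k + 1) (by omega) (by omega) _ hgk2
        simp only [ite_true, if_pos rfl] at hfin
        rw [← hdD (k + 1) hk] at hfin
        omega
    have := hall (n - 2) le_rfl
    omega
  -- upper bound
  have hup : ∑ i ∈ Finset.range (n - 1), (AA hn0 L i).card ≤ 2 * n - 3 := by
    obtain ⟨i0, hi0, hci0⟩ := hshared
    have hle : ∀ i ∈ Finset.range (n - 1), (AA hn0 L i).card ≤ (if i = i0 then 1 else 2) := by
      intro i hiR
      rw [Finset.mem_range] at hiR
      by_cases h : i = i0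
      · rw [if_pos h]
        have hss : AA hn0 L i ⊆ {c i} := by
          intro t ht
          rw [Finset.mem_singleton]
          rcases hsub i (by omega) t ht with h' | h'
          · exact h'
          · rw [h']
            rw [h, ← hci0]
        exact le_trans (Finset.card_le_card hss) (by simp)
      · rw [if_neg h]
        have hss : AA hn0 L i ⊆ {c i, d i} := by
          intro t ht
          rcases hsub i (by omega) t ht with h' | h'
          · exact Finset.mem_insert.2 (Or.inl h')
          · exact Finset.mem_insert.2 (Or.inr (Finset.mem_singleton.2 h'))
        refine le_trans (Finset.card_le_card hss) ?_
        exact le_trans (Finset.card_insert_le _ _) (by simp)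
    have hsum := Finset.sum_le_sum hle
    have h1 : ∑ i ∈ Finset.range (n - 1),
        ((if i = i0 then 1 else 2) + (if i = i0 then (1 : ℕ) else 0))
        = ∑ _i ∈ Finset.range (n - 1), 2 := by
      refine Finset.sum_congr rfl (fun i _ => ?_)
      by_cases h : i = i0 <;> simp [h]
    rw [Finset.sum_add_distrib] at h1
    have h2 : ∑ i ∈ Finset.range (n - 1), (if i = i0 then (1 : ℕ) else 0) = 1 := by
      rw [Finset.sum_ite_eq' (Finset.range (n - 1)) i0 (fun _ => (1 : ℕ))]
      rw [if_pos (Finset.mem_range.2 (by omega))]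
    have h3 : ∑ _i ∈ Finset.range (n - 1), (2 : ℕ) = 2 * (n - 1) := by
      rw [Finset.sum_const, Finset.card_range, smul_eq_mul]
      ring
    omega
  -- lower bound
  have hlow : 2 * n - 3 ≤ ∑ i ∈ Finset.range (n - 1), (AA hn0 L i).card := by
    have hSle : ((Finset.range (n - 1)).filter (fun i => c i = d i)).card ≤ 1 := by
      rw [Finset.card_le_one]
      intro a ha b hb
      rw [Finset.mem_filter, Finset.mem_range] at ha hb
      by_contra hne
      rcases Nat.lt_or_ge a b with h | h
      · have h1 : c a < c b := hc.lt (by omega) h (by omega)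
        have h2 : d b < d a := hd.lt (by omega) h (by omega)
        omega
      · have hba : b < a := by omega
        have h1 : c b < c a := hc.lt (by omega) hba (by omega)
        have h2 : d a < d b := hd.lt (by omega) hba (by omega)
        omega
    have hge : ∀ i ∈ Finset.range (n - 1),
        (if c i = d i then 1 else 2) ≤ (AA hn0 L i).card := by
      intro i hiR
      rw [Finset.mem_range] at hiR
      by_cases h : c i = d i
      · rw [if_pos h]
        exact Finset.card_pos.2 ⟨c i, hc.1 i (by omega) (by omega)⟩
      · rw [if_neg h]
        have hss : ({c i, d i} : Finset ℕ) ⊆ AA hn0 L i := by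
          intro t htm
          rcases Finset.mem_insert.1 htm with h' | h'
          · rw [h']
            exact hc.1 i (by omega) (by omega)
          · rw [Finset.mem_singleton.1 h']
            exact hd.1 i (by omega) (by omega)
        calc (2 : ℕ) = ({c i, d i} : Finset ℕ).card := (Finset.card_pair h).symm
          _ ≤ _ := Finset.card_le_card hss
    have hsum := Finset.sum_le_sum hge
    have h1 : ∑ i ∈ Finset.range (n - 1),
        ((if c i = d i then (1 : ℕ) else 2) + (if c i = d i then (1 : ℕ) else 0))
        = ∑ _i ∈ Finset.range (n - 1), 2 := by
      refine Finset.sum_congr rfl (fun i _ => ?_)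
      by_cases h : c i = d i <;> simp [h]
    rw [Finset.sum_add_distrib] at h1
    have h2 : ((Finset.range (n - 1)).filter (fun i => c i = d i)).card
        = ∑ i ∈ Finset.range (n - 1), (if c i = d i then (1 : ℕ) else 0) :=
      Finset.card_filter _ _
    have h3 : ∑ _i ∈ Finset.range (n - 1), (2 : ℕ) = 2 * (n - 1) := by
      rw [Finset.sum_const, Finset.card_range, smul_eq_mul]
      ring
    omega
  rw [hcost]
  omega

end Temporal
end

section
/- For the even cycle C_n (n divisible by 4), the parity labelling—assigning all odd labels in {1,…,n/2} to every edge of one perfect matching and all even labels in {1,…,n/2} to every edge of the other perfect matching—yields a temporally connected temporal graph. -/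
open Finset

namespace Temporal

variable {n : ℕ}

/-- The parity labelling of the even cycle `C n`: each edge `{v_i, v_{i+1}}` with `i` even
receives all odd labels in `{1, …, n/2}`, and each edge with `i` odd receives all even
labels in `{1, …, n/2}`. -/
def parityLabel (n : ℕ) [NeZero n] : TLabel n := fun e =>
  if ∃ i : Fin n, e = s(i, i + 1) ∧ (i : ℕ) % 2 = 0 then
    (Finset.range (n / 2 + 1)).filter (fun t => t % 2 = 1)
  else if ∃ i : Fin n, e = s(i, i + 1) ∧ (i : ℕ) % 2 = 1 then
    (Finset.range (n / 2 + 1)).filter (fun t => t % 2 = 0 ∧ t ≠ 0)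
  else ∅


open Fin.CommRing

lemma parity_add [NeZero n] (u : Fin n) (j : ℕ) (h2 : 2 ∣ n) :
    ((u + (j : Fin n)) : Fin n).val % 2 = (u.val + j) % 2 := by
  have h1 : ((u + (j : Fin n)).val) = (u.val + j % n) % n := by
    rw [Fin.val_add, Fin.val_natCast]
  have h2' : (u.val + j % n) % n % 2 = (u.val + j % n) % 2 := Nat.mod_mod_of_dvd _ h2
  have h3 : j % n % 2 = j % 2 := Nat.mod_mod_of_dvd _ h2
  omega

lemma parity_sub [NeZero n] (u : Fin n) (j : ℕ) (h2 : 2 ∣ n) :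
    ((u - (j : Fin n)) : Fin n).val % 2 = (u.val + j) % 2 := by
  have key : (u - (j : Fin n)) + (j : Fin n) = u := by ring
  have h1 : (((u - (j : Fin n)) + (j : Fin n)).val) % 2 = ((u - (j : Fin n)).val + j) % 2 := by
    have h1' : (((u - (j : Fin n)) + (j : Fin n)).val) = ((u - (j : Fin n)).val + j % n) % n := by
      rw [Fin.val_add, Fin.val_natCast]
    have h2' : ((u - (j : Fin n)).val + j % n) % n % 2 = ((u - (j : Fin n)).val + j % n) % 2 :=
      Nat.mod_mod_of_dvd _ h2
    have h3 : j % n % 2 = j % 2 := Nat.mod_mod_of_dvd _ h2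
    omega
  rw [key] at h1
  omega

lemma edge_inj [NeZero n] (hn : 4 ≤ n) {i j : Fin n} (h : s(i, i+1) = s(j, j+1)) : i = j := by
  rw [Sym2.eq_iff] at h
  rcases h with ⟨h1, _⟩ | ⟨h1, h2⟩
  · exact h1
  · exfalso
    have hj : j = j + (1 + 1) := by rw [← add_assoc, ← h1, h2]
    have h0 : (1 + 1 : Fin n) = 0 := (left_eq_add.mp hj)
    have hv := congrArg Fin.val h0
    rw [Fin.val_add, Fin.val_one'] at hv
    have e1 : 1 % n = 1 := Nat.mod_eq_of_lt (by omega)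
    rw [e1] at hv
    have e2 : (1 + 1) % n = 1 + 1 := Nat.mod_eq_of_lt (by omega)
    rw [e2] at hv
    simp at hv

lemma mem_label [NeZero n] (hn : 4 ≤ n) (i : Fin n) (t : ℕ) (ht1 : 1 ≤ t) (htn : t ≤ n / 2)
    (hpar : t % 2 ≠ (i : ℕ) % 2) : t ∈ parityLabel n s(i, i+1) := by
  unfold parityLabel
  rcases Nat.mod_two_eq_zero_or_one (i : ℕ) with hi | hi
  · rw [if_pos ⟨i, rfl, hi⟩]
    simp only [Finset.mem_filter, Finset.mem_range]
    omega
  · rw [if_neg, if_pos ⟨i, rfl, hi⟩]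
    · simp only [Finset.mem_filter, Finset.mem_range]
      omega
    · rintro ⟨j, hj, hj0⟩
      have := edge_inj hn hj
      subst this
      omega

lemma fwd [NeZero n] (h2 : 2 ∣ n) (hn : 4 ≤ n) (u : Fin n) (t₀ : ℕ)
    (ht : t₀ % 2 = (u : ℕ) % 2) :
    ∀ k, 1 ≤ k → t₀ + k ≤ n / 2 → JTo (parityLabel n) u (u + (k : Fin n)) (t₀ + k) := by
  intro k hk
  induction k, hk using Nat.le_induction with
  | base =>
    intro hkn
    have hm : t₀ + 1 ∈ parityLabel n s(u, u + 1) :=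
      mem_label hn u (t₀ + 1) (by omega) hkn (by omega)
    have : ((1 : ℕ) : Fin n) = 1 := by push_cast; rfl
    rw [this]
    exact JTo.single _ _ hm
  | succ k hk ih =>
    intro hkn
    have j1 := ih (by omega)
    have hcast : ((k + 1 : ℕ) : Fin n) = (k : Fin n) + 1 := by push_cast; rfl
    rw [hcast, ← add_assoc]
    have hpar : ((u + (k : Fin n)) : Fin n).val % 2 = (u.val + k) % 2 := parity_add u k h2
    have hm : t₀ + k + 1 ∈ parityLabel n s(u + (k : Fin n), (u + (k : Fin n)) + 1) :=
      mem_label hn _ _ (by omega) (by omega) (by omega)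
    exact JTo.step _ _ (t₀ + k) _ j1 hm (by omega)

lemma bwd [NeZero n] (h2 : 2 ∣ n) (hn : 4 ≤ n) (u : Fin n) (t₀ : ℕ)
    (ht : t₀ % 2 ≠ (u : ℕ) % 2) :
    ∀ k, 1 ≤ k → t₀ + k ≤ n / 2 → JTo (parityLabel n) u (u - (k : Fin n)) (t₀ + k) := by
  intro k hk
  induction k, hk using Nat.le_induction with
  | base =>
    intro hkn
    have hpar : ((u - (1 : ℕ) : Fin n)).val % 2 = (u.val + 1) % 2 := parity_sub u 1 h2
    have hm : t₀ + 1 ∈ parityLabel n s(u - ((1:ℕ) : Fin n), (u - ((1:ℕ) : Fin n)) + 1) :=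
      mem_label hn _ _ (by omega) hkn (by omega)
    have hSA : (u - ((1:ℕ) : Fin n)) + 1 = u := by push_cast; ring
    rw [hSA, Sym2.eq_swap] at hm
    exact JTo.single _ _ hm
  | succ k hk ih =>
    intro hkn
    have j1 := ih (by omega)
    have hpar : ((u - ((k+1 : ℕ) : Fin n))).val % 2 = (u.val + (k+1)) % 2 := parity_sub u (k+1) h2
    have hm : t₀ + k + 1 ∈
        parityLabel n s(u - ((k+1:ℕ) : Fin n), (u - ((k+1:ℕ) : Fin n)) + 1) :=
      mem_label hn _ _ (by omega) (by omega) (by omega)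
    have hSA : (u - ((k+1:ℕ) : Fin n)) + 1 = u - ((k:ℕ) : Fin n) := by push_cast; ring
    rw [hSA, Sym2.eq_swap] at hm
    exact JTo.step _ _ (t₀ + k) _ j1 hm (by omega)

/-- The parity labelling of the cycle `C n` (with `4 ∣ n`) is temporally connected. -/
theorem stmt9 (n : ℕ) [NeZero n] (hn : 0 < n) (h4 : 4 ∣ n) : TC (parityLabel n) := by
  have h2 : 2 ∣ n := dvd_trans (by norm_num) h4
  have hn4 : 4 ≤ n := Nat.le_of_dvd hn h4
  intro u v
  by_cases huv : u = v
  · exact Or.inl huv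
  right
  set d : ℕ := (v - u).val with hd
  have hd0 : 0 < d := by
    have hz : v - u ≠ 0 := sub_ne_zero.mpr (fun h => huv h.symm)
    exact Nat.pos_of_ne_zero fun h0 => hz (by rw [hd] at h0; exact Fin.ext (by simpa using h0))
  have hdn : d < n := (v - u).is_lt
  have hfwd : u + ((d : ℕ) : Fin n) = v := by
    rw [hd, Fin.cast_val_eq_self]; ring
  have hbwd : u - ((n - d : ℕ) : Fin n) = v := by
    rw [Nat.cast_sub (le_of_lt hdn), Fin.natCast_self]
    rw [hd, Fin.cast_val_eq_self]; ring
  rcases Nat.mod_two_eq_zero_or_one (u : ℕ) with hu | hu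
  · by_cases hdle : d ≤ n / 2
    · refine ⟨0 + d, ?_⟩
      have := fwd h2 hn4 u 0 (by omega) d (by omega) (by omega)
      rwa [hfwd] at this
    · refine ⟨1 + (n - d), ?_⟩
      have := bwd h2 hn4 u 1 (by omega) (n - d) (by omega) (by omega)
      rwa [hbwd] at this
  · by_cases hdle : 1 + d ≤ n / 2
    · refine ⟨1 + d, ?_⟩
      have := fwd h2 hn4 u 1 (by omega) d (by omega) (by omega)
      rwa [hfwd] at this
    · refine ⟨0 + (n - d), ?_⟩
      have := bwd h2 hn4 u 0 (by omega) (n - d) (by omega) (by omega)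
      rwa [hbwd] at this


end Temporal
end

section
/- For the even cycle C_n with n divisible by 4, the parity labelling (odd labels 1,3,…,n/2−1 on one perfect matching, even labels 2,4,…,n/2 on the other) is minimal: every label on every edge is necessary, i.e. its removal strictly reduces the reachability relation. -/
open Finset

namespace Temporal

variable {n : ℕ}

variable [NeZero n]

open Fin.NatCast Fin.CommRing

lemma pv_add (h2 : 2 ∣ n) (a b : Fin n) :
    ((a + b : Fin n) : ℕ) % 2 = ((a : ℕ) + (b : ℕ)) % 2 := by
  rw [Fin.val_add, Nat.mod_mod_of_dvd _ h2]

lemma pv_sub (h2 : 2 ∣ n) (a b : Fin n) :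
    ((a - b : Fin n) : ℕ) % 2 = ((a : ℕ) + (b : ℕ)) % 2 := by
  have hb : (b : ℕ) < n := b.isLt
  rw [Fin.sub_def]
  show ((n - (b:ℕ) + (a:ℕ)) % n) % 2 = _
  rw [Nat.mod_mod_of_dvd _ h2]
  omega

lemma pv_nat (h2 : 2 ∣ n) (k : ℕ) : (((k : Fin n)) : ℕ) % 2 = k % 2 := by
  rw [Fin.val_natCast, Nat.mod_mod_of_dvd _ h2]

lemma valone (h4 : 4 ≤ n) : ((1 : Fin n) : ℕ) = 1 := by
  rw [Fin.val_one']
  exact Nat.mod_eq_of_lt (by omega)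

lemma edge_inj_s10 (h4 : 4 ≤ n) {a b : Fin n} (h : s(a, a + 1) = s(b, b + 1)) : a = b := by
  rcases Sym2.eq_iff.mp h with ⟨h1, _⟩ | ⟨h1, h2'⟩
  · exact h1
  · exfalso
    have hx : a + 0 = a + (1 + 1) := by
      rw [add_zero]
      nth_rewrite 1 [h1]
      rw [← h2']
      ring
    have h0 : (0 : Fin n) = 1 + 1 := add_left_cancel hx
    have := congrArg Fin.val h0
    rw [Fin.val_add, valone h4, Fin.val_zero, Nat.mod_eq_of_lt (by omega)] at this
    omega

set_option linter.unusedSectionVars false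

lemma mem_parity (h4 : 4 ≤ n) {e : Sym2 (Fin n)} {t : ℕ} :
    t ∈ parityLabel n e ↔
      ∃ a : Fin n, e = s(a, a + 1) ∧ 1 ≤ t ∧ t ≤ n / 2 ∧ t % 2 = ((a : ℕ) + 1) % 2 := by
  unfold parityLabel
  split_ifs with hc1 hc2
  · obtain ⟨i, hei, hi⟩ := hc1
    simp only [Finset.mem_filter, Finset.mem_range]
    constructor
    · rintro ⟨hlt, hod⟩
      exact ⟨i, hei, by omega, by omega, by omega⟩
    · rintro ⟨a, hea, h1, h2', h3⟩
      have hai : a = i := edge_inj_s10 h4 (hea.symm.trans hei)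
      subst hai
      exact ⟨by omega, by omega⟩
  · obtain ⟨i, hei, hi⟩ := hc2
    simp only [Finset.mem_filter, Finset.mem_range]
    constructor
    · rintro ⟨hlt, he2, hne⟩
      exact ⟨i, hei, by omega, by omega, by omega⟩
    · rintro ⟨a, hea, h1, h2', h3⟩
      have hai : a = i := edge_inj_s10 h4 (hea.symm.trans hei)
      subst hai
      exact ⟨by omega, by omega, by omega⟩
  · simp only [Finset.notMem_empty, false_iff]
    rintro ⟨a, hea, h1, h2', h3⟩
    rcases Nat.mod_two_eq_zero_or_one (a : ℕ) with h | h
    · exact hc1 ⟨a, hea, h⟩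
    · exact hc2 ⟨a, hea, h⟩

/-- Tight clockwise journey: the journey from `u` arriving at time `t` used exactly
labels `1, …, t` on consecutive clockwise edges. -/
def CWt (L' : TLabel n) (u : Fin n) (t : ℕ) : Prop :=
  ((u : ℕ) % 2 = 0) ∧
    ∀ k : ℕ, 1 ≤ k → k ≤ t → k ∈ L' s(u + (k : Fin n) - 1, u + (k : Fin n))

lemma jto_struct (h4 : 4 ≤ n) (h2 : 2 ∣ n) (L' : TLabel n)
    (hL : ∀ e, L' e ⊆ parityLabel n e) {u w : Fin n} {t : ℕ} (h : JTo L' u w t) :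
    1 ≤ t ∧ t ≤ n / 2 ∧ ∃ m : ℕ, m ≤ t ∧
      ((w = u + (m : Fin n) ∧ (m = t → CWt L' u t)) ∨
       (w = u - (m : Fin n) ∧ (m = t → (u : ℕ) % 2 = 1))) := by
  induction h with
  | single v t ht =>
    obtain ⟨a, hea, h1, hle, hpar⟩ := (mem_parity h4).mp (hL _ ht)
    rcases Sym2.eq_iff.mp hea with ⟨hua, hva⟩ | ⟨hua, hva⟩
    · refine ⟨h1, hle, 1, h1, Or.inl ⟨?_, ?_⟩⟩
      · rw [hva, ← hua, Nat.cast_one]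
      · intro hm1
        have hu0 : (u : ℕ) % 2 = 0 := by
          rw [← hua] at hpar; omega
        refine ⟨hu0, fun k hk1 hk2 => ?_⟩
        have hk : k = 1 := by omega
        subst hk
        have e1 : u + ((1 : ℕ) : Fin n) - 1 = u := by push_cast; ring
        have e2 : u + ((1 : ℕ) : Fin n) = v := by rw [hva, ← hua]; push_cast; ring
        rw [e1, e2, hm1]
        exact ht
    · refine ⟨h1, hle, 1, h1, Or.inr ⟨?_, ?_⟩⟩
      · rw [hva, Nat.cast_one]
        rw [hua]; ring
      · intro hm1
        have := pv_add h2 a 1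
        rw [valone h4] at this
        rw [← hua] at this
        omega
  | step v w t t' hj hmem hlt ih =>
    obtain ⟨a, hea, h1', hle', hpar⟩ := (mem_parity h4).mp (hL _ hmem)
    obtain ⟨ht1, ht2, m, hm, hcase⟩ := ih
    refine ⟨h1', hle', ?_⟩
    rcases Sym2.eq_iff.mp hea with ⟨hva, hwa⟩ | ⟨hva, hwa⟩
    · -- w = v + 1
      have hw : w = v + 1 := by rw [hwa, hva]
      rcases hcase with ⟨hv, htight⟩ | ⟨hv, htight⟩
      · refine ⟨m + 1, by omega, Or.inl ⟨?_, ?_⟩⟩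
        · rw [hw, hv]; push_cast; ring
        · intro hmt
          obtain ⟨hu0, hlab⟩ := htight (by omega)
          refine ⟨hu0, fun k hk1 hk2 => ?_⟩
          rcases Nat.lt_or_ge k t' with hk | hk
          · exact hlab k hk1 (by omega)
          · have hkt : k = t' := by omega
            subst hkt
            have e1 : u + ((k : ℕ) : Fin n) - 1 = v := by
              rw [hv, ← hmt]; push_cast; ring
            have e2 : u + ((k : ℕ) : Fin n) = w := by
              rw [hw, ← e1]; ring
            rw [e1, e2]
            exact hmem
      · by_cases hm0 : m = 0
        · refine ⟨1, by omega, Or.inl ⟨?_, ?_⟩⟩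
          · rw [hw, hv, hm0]; push_cast; ring
          · intro h1t; exfalso; omega
        · refine ⟨m - 1, by omega, Or.inr ⟨?_, ?_⟩⟩
          · rw [hw, hv, Nat.cast_sub (by omega : 1 ≤ m), Nat.cast_one]; ring
          · intro hmt; exfalso; omega
    · -- w = v - 1
      have hw : w = v - 1 := by rw [hwa, hva]; ring
      rcases hcase with ⟨hv, htight⟩ | ⟨hv, htight⟩
      · by_cases hm0 : m = 0
        · refine ⟨1, by omega, Or.inr ⟨?_, ?_⟩⟩
          · rw [hw, hv, hm0]; push_cast; ring
          · intro h1t; exfalso; omega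
        · refine ⟨m - 1, by omega, Or.inl ⟨?_, ?_⟩⟩
          · rw [hw, hv, Nat.cast_sub (by omega : 1 ≤ m), Nat.cast_one]; ring
          · intro hmt; exfalso; omega
      · refine ⟨m + 1, by omega, Or.inr ⟨?_, ?_⟩⟩
        · rw [hw, hv]; push_cast; ring
        · intro hmt
          exact htight (by omega)

lemma journey_fwd (h4 : 4 ≤ n) (h2 : 2 ∣ n) {u : Fin n} (hu : (u : ℕ) % 2 = 0) :
    ∀ k : ℕ, 1 ≤ k → k ≤ n / 2 → JTo (parityLabel n) u (u + (k : Fin n)) k := by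
  intro k
  induction k with
  | zero => omega
  | succ j ih =>
    intro _ hle
    rcases Nat.eq_zero_or_pos j with hj | hj
    · subst hj
      apply JTo.single
      rw [mem_parity h4]
      exact ⟨u, by push_cast; ring_nf, by omega, by omega, by omega⟩
    · refine JTo.step (u + (j : Fin n)) _ j _ (ih (by omega) (by omega)) ?_ (by omega)
      rw [mem_parity h4]
      refine ⟨u + (j : Fin n), ?_, by omega, by omega, ?_⟩
      · have : u + ((j + 1 : ℕ) : Fin n) = u + (j : Fin n) + 1 := by push_cast; ring
        rw [this]
      · have e1 := pv_add h2 u (j : Fin n)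
        have e2 := pv_nat h2 (n := n) j
        omega

/-- The parity labelling of the cycle `C n` (with `4 ∣ n`) is minimal: every label is
necessary. -/
theorem stmt10 (n : ℕ) [NeZero n] (hn : 0 < n) (h4 : 4 ∣ n) : Minimal (parityLabel n) := by
  have h4' : 4 ≤ n := Nat.le_of_dvd hn h4
  have h2 : 2 ∣ n := dvd_trans ⟨2, rfl⟩ h4
  intro e t ht
  obtain ⟨i, he, ht1, ht2, htp⟩ := (mem_parity h4').mp ht
  set u : Fin n := i + 1 - (t : Fin n) with hu_def
  set v : Fin n := u + ((n / 2 : ℕ) : Fin n) with hv_def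
  have hu0 : (u : ℕ) % 2 = 0 := by
    have e1 := pv_sub h2 (i + 1) ((t : ℕ) : Fin n)
    have e2 := pv_add h2 i 1
    have e3 := pv_nat h2 (n := n) t
    have e4 : ((1 : Fin n) : ℕ) = 1 := valone h4'
    rw [← hu_def] at e1
    omega
  refine ⟨u, v, Or.inr ⟨n / 2, ?_⟩, ?_⟩
  · exact journey_fwd h4' h2 hu0 (n / 2) (by omega) le_rfl
  · intro hr
    have hr' : u = v ∨ ∃ T, JTo (erase (parityLabel n) e t) u v T := hr
    rcases hr' with huv | ⟨T, hT⟩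
    · have hc : ((n / 2 : ℕ) : Fin n) = 0 := (left_eq_add.mp (hv_def ▸ huv))
      have := congrArg Fin.val hc
      rw [Fin.val_natCast, Fin.val_zero, Nat.mod_eq_of_lt (by omega : n / 2 < n)] at this
      omega
    · have hsub : ∀ f, erase (parityLabel n) e t f ⊆ parityLabel n f := by
        intro f x hx
        unfold erase at hx
        split at hx
        · exact Finset.mem_of_mem_erase hx
        · exact hx
      obtain ⟨hT1, hT2, m, hm, hcase⟩ := jto_struct h4' h2 _ hsub hT
      rcases hcase with ⟨hw, htight⟩ | ⟨hw, htight⟩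
      · have hcast : (m : Fin n) = ((n / 2 : ℕ) : Fin n) :=
          add_left_cancel (hw.symm.trans hv_def)
        have hmval : m = n / 2 := by
          have := congrArg Fin.val hcast
          rwa [Fin.val_natCast, Fin.val_natCast, Nat.mod_eq_of_lt (by omega : m < n),
            Nat.mod_eq_of_lt (by omega : n / 2 < n)] at this
        obtain ⟨_, hlab⟩ := htight (by omega)
        have hlabt := hlab t ht1 (by omega)
        have e1 : u + ((t : ℕ) : Fin n) - 1 = i := by rw [hu_def]; ring
        have e2 : u + ((t : ℕ) : Fin n) = i + 1 := by rw [hu_def]; ring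
        rw [e1, e2, ← he] at hlabt
        unfold erase at hlabt
        simp only [if_pos rfl] at hlabt
        exact absurd (Finset.mem_erase.mp hlabt).1 (by simp)
      · have hneg : u - (m : Fin n) = u + ((n / 2 : ℕ) : Fin n) := hw.symm.trans hv_def
        have hhalf : ((n / 2 : ℕ) : Fin n) + ((n / 2 : ℕ) : Fin n) = 0 := by
          rw [← Nat.cast_add]
          have hnn : n / 2 + n / 2 = n := by omega
          rw [hnn, Fin.natCast_self]
        have hcast : (m : Fin n) = ((n / 2 : ℕ) : Fin n) := by
          linear_combination -hneg - hhalf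
        have hmval : m = n / 2 := by
          have := congrArg Fin.val hcast
          rwa [Fin.val_natCast, Fin.val_natCast, Nat.mod_eq_of_lt (by omega : m < n),
            Nat.mod_eq_of_lt (by omega : n / 2 < n)] at this
        have := htight (by omega)
        omega


end Temporal
end
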